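/- arXiv:1603.00527 — 8 statements merged into one kernel-verified Lean document; each statement's English description precedes it below -/
import Mathlib

section
/- Suppose (B,Q) is a numéraire–martingale measure couple and the fair FRA rates satisfy L_t(T,T+δ_i) = E^{Q^{T+δ_i}}[L_T(T,T+δ_i) | F_t]. Then for every i = 1,…,m and all 0 ≤ t ≤ T ≤ 𝕋, the multiplicative spread S^{δ_i}(t,T) := (1+δ_i L_t(T,T+δ_i)) B(t,T+δ_i)/B(t,T) satisfies S^{δ_i}(t,T) = E^{Q^T}[S^{δ_i}(T,T) | F_t] Q-almost surely; that is, (S^{δ_i}(t,T))_{0≤t≤T} is a martingale under the T-forward measure Q^T. -/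
/-!
By Bayes' formula, `E^{Q^T}[X | F_t] = E_Q[X / B_T | F_t] / E_Q[1 / B_T | F_t]`, and the bond
martingale property gives `E_Q[1 / B_T | F_t] = B(t,T) / B_t`. Since `B(T,T) = 1`, the claim thus
says that `(1 + δ L_t(T,T+δ)) B(t,T+δ) / B_t` is a `Q`-martingale in `t`. This process is the
`Q^{T+δ}`-martingale `1 + δ L_t(T,T+δ)` multiplied by the density process
`E_Q[1 / B_{T+δ} | F_t]`, which Bayes' formula, applied once more, shows to be a `Q`-martingale.
-/

open MeasureTheory

section WithDensity

variable {Ω : Type*} {m m0 : MeasurableSpace Ω} {Q : Measure Ω} {d : Ω → ℝ}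

lemma setIntegral_withDensity_ofReal (hd : Measurable d) (hd0 : 0 ≤ d) (f : Ω → ℝ)
    {A : Set Ω} (hA : MeasurableSet A) :
    ∫ ω in A, f ω ∂Q.withDensity (fun ω => ENNReal.ofReal (d ω)) =
      ∫ ω in A, f ω * d ω ∂Q := by
  rw [setIntegral_withDensity_eq_setIntegral_toReal_smul hd.ennreal_ofReal
    (ae_of_all _ fun _ => ENNReal.ofReal_lt_top) f hA]
  refine integral_congr_ae (ae_of_all _ fun ω => ?_)
  simp only [ENNReal.toReal_ofReal (hd0 ω), smul_eq_mul, mul_comm]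

lemma integrable_withDensity_ofReal_iff (hd : Measurable d) (hd0 : 0 ≤ d) {f : Ω → ℝ} :
    Integrable f (Q.withDensity fun ω => ENNReal.ofReal (d ω)) ↔ Integrable (f * d) Q := by
  rw [integrable_withDensity_iff hd.ennreal_ofReal (ae_of_all _ fun _ => ENNReal.ofReal_lt_top)]
  simp only [ENNReal.toReal_ofReal (hd0 _)]
  rfl

theorem condExp_withDensity_mul_condExp [IsFiniteMeasure Q] (hm : m ≤ m0) (hd : Measurable d)
    (hd0 : 0 ≤ d) (hdint : Integrable d Q) (X : Ω → ℝ) :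
    (Q.withDensity fun ω => ENNReal.ofReal (d ω))[X|m] * Q[d|m] =ᵐ[Q] Q[X * d|m] := by
  set μ := Q.withDensity fun ω => ENNReal.ofReal (d ω)
  have : IsFiniteMeasure μ := isFiniteMeasure_withDensity_ofReal hdint.2
  by_cases hX : Integrable X μ
  swap
  · rw [condExp_of_not_integrable hX, zero_mul,
      condExp_of_not_integrable ((integrable_withDensity_ofReal_iff hd hd0).not.1 hX)]
  have hXd : Integrable (X * d) Q := (integrable_withDensity_ofReal_iff hd hd0).1 hX
  have hYd : Integrable (μ[X|m] * d) Q :=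
    (integrable_withDensity_ofReal_iff hd hd0).1 integrable_condExp
  refine (condExp_mul_of_stronglyMeasurable_left stronglyMeasurable_condExp hYd hdint).symm.trans
    (ae_eq_condExp_of_forall_setIntegral_eq hm hXd (fun _ _ _ => integrable_condExp.integrableOn)
      (fun A hA _ => ?_) stronglyMeasurable_condExp.aestronglyMeasurable)
  have hA0 : MeasurableSet A := hm A hA
  calc ∫ ω in A, Q[μ[X|m] * d|m] ω ∂Q
        = ∫ ω in A, μ[X|m] ω * d ω ∂Q := setIntegral_condExp hm hYd hA
    _ = ∫ ω in A, μ[X|m] ω ∂μ := (setIntegral_withDensity_ofReal hd hd0 _ hA0).symm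
    _ = ∫ ω in A, X ω ∂μ := setIntegral_condExp hm hX hA
    _ = ∫ ω in A, (X * d) ω ∂Q := setIntegral_withDensity_ofReal hd hd0 _ hA0

end WithDensity

section ForwardMeasure

variable {Ω : Type*} {m m₁ m₂ m0 : MeasurableSpace Ω} {Q : Measure Ω} {N : Ω → ℝ}

/-- For `N = B_T` this is the `T`-forward measure: `E_Q[1/B_T]` plays the role of `B(0,T)`. -/
noncomputable def forwardMeasure (Q : Measure Ω) (N : Ω → ℝ) : Measure Ω :=
  Q.withDensity fun ω => ENNReal.ofReal ((N ω * ∫ ω', (N ω')⁻¹ ∂Q)⁻¹)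

variable [IsFiniteMeasure Q]

theorem condExp_forwardMeasure_mul_condExp_inv [NeZero Q] (hm : m ≤ m0) (hN : Measurable N)
    (hNpos : ∀ ω, 0 < N ω) (hNint : Integrable N⁻¹ Q) (X : Ω → ℝ) :
    (forwardMeasure Q N)[X|m] * Q[N⁻¹|m] =ᵐ[Q] Q[X * N⁻¹|m] := by
  set c := ∫ ω, (N ω)⁻¹ ∂Q
  have hc : 0 < c := by
    refine (integral_pos_iff_support_of_nonneg (fun ω => (inv_pos.2 (hNpos ω)).le) hNint).2 ?_
    rw [Function.support_eq_univ fun ω => (inv_pos.2 (hNpos ω)).ne']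
    exact (NeZero.ne (Q Set.univ)).bot_lt
  have hd : (fun ω => (N ω * c)⁻¹) = c⁻¹ • N⁻¹ := by
    ext ω; simp [mul_comm]
  have bayes := condExp_withDensity_mul_condExp hm (d := fun ω => (N ω * c)⁻¹)
    (by rw [hd]; exact hN.inv.const_smul _) (fun ω => (inv_pos.2 (mul_pos (hNpos ω) hc)).le)
    (by rw [hd]; exact hNint.smul _) X
  rw [hd, show X * c⁻¹ • N⁻¹ = c⁻¹ • (X * N⁻¹) by ext; simp; ring] at bayes
  filter_upwards [bayes, condExp_smul (μ := Q) c⁻¹ N⁻¹ m,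
    condExp_smul (μ := Q) c⁻¹ (X * N⁻¹) m] with ω hω hN' hXN
  rw [Pi.mul_apply, hN', hXN] at hω
  simp only [Pi.smul_apply, smul_eq_mul, Pi.mul_apply] at hω ⊢
  rw [mul_left_comm] at hω
  exact mul_left_cancel₀ (inv_ne_zero hc.ne') hω

theorem ae_eq_condExp_forwardMeasure_iff [NeZero Q] (hm : m ≤ m0) (hN : Measurable N)
    (hNpos : ∀ ω, 0 < N ω) (hNint : Integrable N⁻¹ Q)
    (hpos : ∀ᵐ ω ∂Q, 0 < Q[N⁻¹|m] ω) {X Y : Ω → ℝ} :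
    Y =ᵐ[Q] (forwardMeasure Q N)[X|m] ↔ Y * Q[N⁻¹|m] =ᵐ[Q] Q[X * N⁻¹|m] := by
  have bayes := condExp_forwardMeasure_mul_condExp_inv hm hN hNpos hNint X
  refine ⟨fun h => (h.mul (ae_eq_refl _)).trans bayes, fun h => ?_⟩
  filter_upwards [h, bayes, hpos] with ω h₁ h₂ h₃
  exact mul_right_cancel₀ h₃.ne' (h₁.trans h₂.symm)

theorem condExp_mul_condExp_inv_of_ae_eq_condExp_forwardMeasure [NeZero Q]
    (h₁₂ : m₁ ≤ m₂) (hm₂ : m₂ ≤ m0) (hN : Measurable N) (hNpos : ∀ ω, 0 < N ω)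
    (hNint : Integrable N⁻¹ Q) {X Y₁ Y₂ : Ω → ℝ}
    (h₁ : Y₁ =ᵐ[Q] (forwardMeasure Q N)[X|m₁]) (h₂ : Y₂ =ᵐ[Q] (forwardMeasure Q N)[X|m₂]) :
    Q[Y₂ * Q[N⁻¹|m₂]|m₁] =ᵐ[Q] Y₁ * Q[N⁻¹|m₁] := by
  have hY₂ := (h₂.mul (ae_eq_refl _)).trans
    (condExp_forwardMeasure_mul_condExp_inv hm₂ hN hNpos hNint X)
  calc Q[Y₂ * Q[N⁻¹|m₂]|m₁] =ᵐ[Q] Q[Q[X * N⁻¹|m₂]|m₁] := condExp_congr_ae hY₂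
    _ =ᵐ[Q] Q[X * N⁻¹|m₁] := condExp_condExp_of_le h₁₂ hm₂
    _ =ᵐ[Q] Y₁ * Q[N⁻¹|m₁] := ((h₁.mul (ae_eq_refl _)).trans
        (condExp_forwardMeasure_mul_condExp_inv (h₁₂.trans hm₂) hN hNpos hNint X)).symm

theorem condExp_affine_mul_condExp_inv_of_ae_eq_condExp_forwardMeasure [NeZero Q]
    (h₁₂ : m₁ ≤ m₂) (hm₂ : m₂ ≤ m0) (hN : Measurable N) (hNpos : ∀ ω, 0 < N ω)
    (hNint : Integrable N⁻¹ Q) {X Y₁ Y₂ : Ω → ℝ} (h₁ : Y₁ =ᵐ[Q] (forwardMeasure Q N)[X|m₁])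
    (h₂ : Y₂ =ᵐ[Q] (forwardMeasure Q N)[X|m₂]) (a b : ℝ) :
    Q[(fun ω => a + b * Y₂ ω) * Q[N⁻¹|m₂]|m₁] =ᵐ[Q]
      (fun ω => a + b * Y₁ ω) * Q[N⁻¹|m₁] := by
  have hY₂int : Integrable (Y₂ * Q[N⁻¹|m₂]) Q := integrable_condExp.congr
    ((h₂.mul (ae_eq_refl _)).trans
      (condExp_forwardMeasure_mul_condExp_inv hm₂ hN hNpos hNint X)).symm
  have hsplit : (fun ω => a + b * Y₂ ω) * Q[N⁻¹|m₂] =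
      a • Q[N⁻¹|m₂] + b • (Y₂ * Q[N⁻¹|m₂]) := by
    ext ω; simp only [Pi.mul_apply, Pi.add_apply, Pi.smul_apply, smul_eq_mul]; ring
  rw [hsplit]
  filter_upwards [
    condExp_add ((integrable_condExp (m := m₂) (f := N⁻¹)).smul a) (hY₂int.smul b) m₁,
    condExp_smul (μ := Q) a Q[N⁻¹|m₂] m₁, condExp_smul (μ := Q) b (Y₂ * Q[N⁻¹|m₂]) m₁,
    condExp_condExp_of_le (μ := Q) (f := N⁻¹) h₁₂ hm₂,
    condExp_mul_condExp_inv_of_ae_eq_condExp_forwardMeasure h₁₂ hm₂ hN hNpos hNint h₁ h₂]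
    with ω hadd ha hb htower hmart
  rw [hadd, Pi.add_apply, ha, hb, Pi.smul_apply, Pi.smul_apply, htower, hmart]
  simp only [Pi.mul_apply, smul_eq_mul]
  ring

end ForwardMeasure

theorem stmt_2_general
    {Ω : Type*} {m0 : MeasurableSpace Ω} (Q : Measure Ω) [IsProbabilityMeasure Q]
    (𝕋 : ℝ) (ℱ : Filtration ℝ m0)
    -- the finite set of tenors `δ 0 < … < δ (m-1)`, all positive
    (m : ℕ) (δ : Fin m → ℝ) (hδpos : ∀ i, 0 < δ i)
    -- the numéraire process: strictly positive, adapted, with `B 0 = 1`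
    (B : ℝ → Ω → ℝ)
    (hBpos : ∀ t ω, 0 < B t ω)
    (hBadapt : ∀ t, StronglyMeasurable[ℱ t] (B t))
    -- OIS bond prices `P t T = B(t,T)`: positive, adapted, `B(T,T)=1`, discounted martingale
    (P : ℝ → ℝ → Ω → ℝ)
    (hPpos : ∀ t T ω, 0 < P t T ω)
    (hPTT : ∀ T ω, P T T ω = 1)
    (hPInt : ∀ t T, 0 ≤ t → t ≤ T → Integrable (fun ω => P t T ω / B t ω) Q)
    (hPMart : ∀ s t T, 0 ≤ s → s ≤ t → t ≤ T →
      Q[fun ω => P t T ω / B t ω | ℱ s] =ᵐ[Q] fun ω => P s T ω / B s ω)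
    -- fair FRA rates: `L i t T = L_t(T, T+δ i)`, adapted, and martingales under the
    -- `(T+δ i)`-forward measures `dQ^{T+δ i}/dQ = 1/(B_{T+δ i} B(0,T+δ i))`
    (L : Fin m → ℝ → ℝ → Ω → ℝ)
    (hLmart : ∀ i t T, 0 ≤ t → t ≤ T → T ≤ 𝕋 →
      L i t T =ᵐ[Q]
        (Q.withDensity (fun ω =>
            ENNReal.ofReal ((B (T + δ i) ω * ∫ ω', (B (T + δ i) ω')⁻¹ ∂Q)⁻¹)))[
          fun ω => L i T T ω | ℱ t])
    -- conclusion: the multiplicative spread is a martingale under the `T`-forward measure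
    (i : Fin m) (t T : ℝ) (ht : 0 ≤ t) (htT : t ≤ T) (hT𝕋 : T ≤ 𝕋) :
    (fun ω => (1 + δ i * L i t T ω) * P t (T + δ i) ω / P t T ω) =ᵐ[Q]
      (Q.withDensity (fun ω =>
          ENNReal.ofReal ((B T ω * ∫ ω', (B T ω')⁻¹ ∂Q)⁻¹)))[
        fun ω => (1 + δ i * L i T T ω) * P T (T + δ i) ω / P T T ω | ℱ t] := by
  have hT0 : 0 ≤ T := ht.trans htT
  have hTS : T ≤ T + δ i := le_add_of_nonneg_right (hδpos i).le
  have hBmeas : ∀ u, Measurable (B u) := fun u => ((hBadapt u).mono (ℱ.le u)).measurable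
  have hdiag : ∀ u, (fun ω => P u u ω / B u ω) = (B u)⁻¹ :=
    fun u => funext fun ω => by simp [hPTT]
  have hinv : ∀ u, 0 ≤ u → Integrable (B u)⁻¹ Q := fun u hu => hdiag u ▸ hPInt u u hu le_rfl
  have hdisc : ∀ s u, 0 ≤ s → s ≤ u → Q[(B u)⁻¹|ℱ s] =ᵐ[Q] fun ω => P s u ω / B s ω :=
    fun s u hs hsu => hdiag u ▸ hPMart s u u hs hsu le_rfl
  have hspread := condExp_affine_mul_condExp_inv_of_ae_eq_condExp_forwardMeasure
    (ℱ.mono htT) (ℱ.le T) (hBmeas _) (hBpos _) (hinv _ (hT0.trans hTS))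
    (hLmart i t T ht htT hT𝕋) (hLmart i T T hT0 le_rfl hT𝕋) 1 (δ i)
  refine (ae_eq_condExp_forwardMeasure_iff (ℱ.le t) (hBmeas T) (hBpos T) (hinv T hT0)
    ?_).2 ?_
  · filter_upwards [hdisc t T ht htT] with ω hω
    rw [hω]
    exact div_pos (hPpos t T ω) (hBpos t ω)
  calc _ =ᵐ[Q] (fun ω => 1 + δ i * L i t T ω) * Q[(B (T + δ i))⁻¹|ℱ t] := by
        filter_upwards [hdisc t T ht htT, hdisc t (T + δ i) ht (htT.trans hTS)]
          with ω hT hS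
        simp only [Pi.mul_apply, hT, hS]
        field_simp [(hPpos t T ω).ne']
    _ =ᵐ[Q] Q[(fun ω => 1 + δ i * L i T T ω) * Q[(B (T + δ i))⁻¹|ℱ T]|ℱ t] := hspread.symm
    _ =ᵐ[Q] _ := by
        refine condExp_congr_ae ?_
        filter_upwards [hdisc T (T + δ i) hT0 hTS] with ω hω
        simp only [Pi.mul_apply, hω, hPTT, Pi.inv_apply]
        ring

/-- If `(B,Q)` is a numéraire–martingale measure couple and the fair FRA rates
satisfy `L_t(T,T+δ i) = E^{Q^{T+δ i}}[L_T(T,T+δ i) | F_t]`, then for every `i` and all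
`0 ≤ t ≤ T ≤ 𝕋` the multiplicative spread
`S^{δ i}(t,T) := (1 + δ i L_t(T,T+δ i)) B(t,T+δ i) / B(t,T)` satisfies
`S^{δ i}(t,T) = E^{Q^T}[S^{δ i}(T,T) | F_t]` `Q`-a.s., i.e. it is a martingale under the
`T`-forward measure `dQ^T/dQ = 1/(B_T B(0,T))`. -/
theorem stmt_2
    {Ω : Type*} {m0 : MeasurableSpace Ω} (Q : Measure Ω) [IsProbabilityMeasure Q]
    (𝕋 : ℝ) (ℱ : Filtration ℝ m0)
    -- the finite set of tenors `δ 0 < … < δ (m-1)`, all positive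
    (m : ℕ) (δ : Fin m → ℝ) (hδpos : ∀ i, 0 < δ i) (hδmono : StrictMono δ)
    -- the numéraire process: strictly positive, adapted, with `B 0 = 1`
    (B : ℝ → Ω → ℝ)
    (hBpos : ∀ t ω, 0 < B t ω)
    (hB0 : ∀ ω, B 0 ω = 1)
    (hBadapt : ∀ t, StronglyMeasurable[ℱ t] (B t))
    -- OIS bond prices `P t T = B(t,T)`: positive, adapted, `B(T,T)=1`, discounted martingale
    (P : ℝ → ℝ → Ω → ℝ)
    (hPpos : ∀ t T ω, 0 < P t T ω)
    (hPadapt : ∀ t T, StronglyMeasurable[ℱ t] (P t T))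
    (hPTT : ∀ T ω, P T T ω = 1)
    (hPInt : ∀ t T, 0 ≤ t → t ≤ T → Integrable (fun ω => P t T ω / B t ω) Q)
    (hPMart : ∀ s t T, 0 ≤ s → s ≤ t → t ≤ T →
      Q[fun ω => P t T ω / B t ω | ℱ s] =ᵐ[Q] fun ω => P s T ω / B s ω)
    -- fair FRA rates: `L i t T = L_t(T, T+δ i)`, adapted, and martingales under the
    -- `(T+δ i)`-forward measures `dQ^{T+δ i}/dQ = 1/(B_{T+δ i} B(0,T+δ i))`
    (L : Fin m → ℝ → ℝ → Ω → ℝ)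
    (hLadapt : ∀ i t T, StronglyMeasurable[ℱ t] (L i t T))
    (hLmart : ∀ i t T, 0 ≤ t → t ≤ T → T ≤ 𝕋 →
      L i t T =ᵐ[Q]
        (Q.withDensity (fun ω =>
            ENNReal.ofReal ((B (T + δ i) ω * ∫ ω', (B (T + δ i) ω')⁻¹ ∂Q)⁻¹)))[
          fun ω => L i T T ω | ℱ t])
    -- conclusion: the multiplicative spread is a martingale under the `T`-forward measure
    (i : Fin m) (t T : ℝ) (ht : 0 ≤ t) (htT : t ≤ T) (hT𝕋 : T ≤ 𝕋) :
    (fun ω => (1 + δ i * L i t T ω) * P t (T + δ i) ω / P t T ω) =ᵐ[Q]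
      (Q.withDensity (fun ω =>
          ENNReal.ofReal ((B T ω * ∫ ω', (B T ω')⁻¹ ∂Q)⁻¹)))[
        fun ω => (1 + δ i * L i T T ω) * P T (T + δ i) ω / P T T ω | ℱ t] :=
  stmt_2_general Q 𝕋 ℱ m δ hδpos B hBpos hBadapt P hPpos hPTT hPInt hPMart L hLmart i t T ht htT hT𝕋
end

section
/- Let (X,u,v) be an affine multi-curve model. Then X generates exponentially affine OIS bond prices and spreads: for all 0 ≤ t ≤ T ≤ 𝕋 and i = 1,…,m, B(t,T)/B_t = exp(A^0(t,T) + ⟨B^0(t,T), X_t⟩) and S^{δ_i}(t,T) = exp(A^i(t,T) + ⟨B^i(t,T), X_t⟩), where A^0(t,T) = v_0(T) + φ(T−t, u_0(T)), B^0(t,T) = ψ(T−t, u_0(T)), A^i(t,T) = v_i(T) + φ(T−t, u_i(T)+u_0(T)) − φ(T−t, u_0(T)), and B^i(t,T) = ψ(T−t, u_i(T)+u_0(T)) − ψ(T−t, u_0(T)), with φ and ψ the characteristic exponents of X. -/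
/-!
Both formulas come from the affine transform formula for `X`. For the bond price,
`1 / B_T = e^{v_0(T)} e^{⟨u_0(T), X_T⟩}`. For the spread, the density of the `T`-forward measure
is a constant multiple of `D = e^{⟨u_0(T), X_T⟩}`, so Bayes' formula gives
`S(t,T) = E[D S(T,T) | F_t] / E[D | F_t]`, a quotient of two affine transforms, which produces
the differences `φ(T-t, u_i+u_0) - φ(T-t, u_0)` and `ψ(T-t, u_i+u_0) - ψ(T-t, u_0)`.
To verify Bayes' formula for a candidate `g` one needs `g D` integrable, which follows from the
integrability of `g E[D | F_t]` by pulling `g` out of the Lebesgue conditional expectation.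
-/

open MeasureTheory RealInnerProductSpace
open scoped ENNReal

namespace MeasureTheory

variable {Ω : Type*} {m m0 : MeasurableSpace Ω} {μ : Measure Ω}

theorem trim_withDensity_eq_withDensity_condLExp (hm : m ≤ m0) [SigmaFinite (μ.trim hm)]
    (X : Ω → ℝ≥0∞) : (μ.withDensity X).trim hm = (μ.trim hm).withDensity μ⁻[X|m] := by
  refine @Measure.ext _ m _ _ fun s hs => ?_
  rw [trim_measurableSet_eq hm hs, withDensity_apply _ (hm s hs), withDensity_apply _ hs,
    setLIntegral_condLExp_trim hm _ _ hs]

theorem lintegral_mul_condLExp (hm : m ≤ m0) [SigmaFinite (μ.trim hm)] {k X : Ω → ℝ≥0∞}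
    (hk : Measurable[m] k) (hX : AEMeasurable X μ) :
    ∫⁻ ω, k ω * μ⁻[X|m] ω ∂μ = ∫⁻ ω, k ω * X ω ∂μ := calc
  _ = ∫⁻ ω, μ⁻[X|m] ω * k ω ∂μ.trim hm := by
    simp_rw [mul_comm (k _)]
    exact (lintegral_trim hm ((measurable_condLExp m μ X).mul hk)).symm
  _ = ∫⁻ ω, k ω ∂(μ.withDensity X).trim hm := by
    rw [trim_withDensity_eq_withDensity_condLExp,
      lintegral_withDensity_eq_lintegral_mul _ (measurable_condLExp m μ X) hk]
    rfl
  _ = ∫⁻ ω, k ω * X ω ∂μ := by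
    rw [lintegral_trim hm hk,
      lintegral_withDensity_eq_lintegral_mul₀ hX (hk.mono hm le_rfl).aemeasurable]
    simp_rw [Pi.mul_apply, mul_comm (X _)]

theorem integrable_mul_of_integrable_mul_condExp (hm : m ≤ m0) [IsFiniteMeasure μ] {k G : Ω → ℝ}
    (hk : StronglyMeasurable[m] k) (hG : Integrable G μ) (hG0 : 0 ≤ᵐ[μ] G)
    (hkG : Integrable (fun ω => k ω * μ[G|m] ω) μ) :
    Integrable (fun ω => k ω * G ω) μ := by
  refine ⟨(hk.mono hm).aestronglyMeasurable.mul hG.1, ?_⟩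
  calc ∫⁻ ω, ‖k ω * G ω‖ₑ ∂μ
      = ∫⁻ ω, ‖k ω‖ₑ * ENNReal.ofReal (G ω) ∂μ := by
        refine lintegral_congr_ae ?_
        filter_upwards [hG0] with ω hω
        rw [enorm_mul, Real.enorm_eq_ofReal hω]
    _ = ∫⁻ ω, ‖k ω‖ₑ * μ⁻[fun ω => ENNReal.ofReal (G ω)|m] ω ∂μ :=
        (lintegral_mul_condLExp hm hk.enorm hG.1.aemeasurable.ennreal_ofReal).symm
    _ = ∫⁻ ω, ‖k ω * μ[G|m] ω‖ₑ ∂μ := by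
        refine lintegral_congr_ae ?_
        filter_upwards [condLExp_ofReal m hG hG0, condExp_nonneg hG0 (m := m)] with ω h h0
        rw [h, enorm_mul, Real.enorm_eq_ofReal h0]
    _ < ∞ := hkG.2

theorem ae_eq_condExp_withDensity_of_condExp_mul_eq (hm : m ≤ m0) [IsFiniteMeasure μ]
    {D f g : Ω → ℝ} (hD : Integrable D μ) (hD0 : 0 ≤ D) (hg : StronglyMeasurable[m] g)
    (hDf : Integrable (fun ω => D ω * f ω) μ)
    (hbayes : μ[fun ω => D ω * f ω|m] =ᵐ[μ] fun ω => g ω * μ[D|m] ω) :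
    g =ᵐ[μ.withDensity fun ω => ENNReal.ofReal (D ω)]
      (μ.withDensity fun ω => ENNReal.ofReal (D ω))[f|m] := by
  have hDnn : AEMeasurable (fun ω => (D ω).toNNReal) μ := hD.1.aemeasurable.real_toNNReal
  have hsmul (h : Ω → ℝ) : (fun ω => (D ω).toNNReal • h ω) = fun ω => D ω * h ω := by
    ext ω
    rw [NNReal.smul_def, smul_eq_mul, Real.coe_toNNReal _ (hD0 ω)]
  have integrable_iff (h : Ω → ℝ) :
      Integrable h (μ.withDensity fun ω => ENNReal.ofReal (D ω)) ↔
        Integrable (fun ω => D ω * h ω) μ := by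
    rw [← hsmul]
    exact integrable_withDensity_iff_integrable_smul₀ hDnn
  have setIntegral_eq (h : Ω → ℝ) {s : Set Ω} (hs : MeasurableSet[m] s) :
      ∫ ω in s, h ω ∂μ.withDensity (fun ω => ENNReal.ofReal (D ω)) = ∫ ω in s, D ω * h ω ∂μ := by
    rw [← hsmul]
    exact setIntegral_withDensity_eq_setIntegral_smul₀ hDnn.restrict h (hm s hs)
  have : IsFiniteMeasure (μ.withDensity fun ω => ENNReal.ofReal (D ω)) :=
    isFiniteMeasure_withDensity_ofReal hD.2
  have hgD : Integrable (fun ω => g ω * D ω) μ :=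
    integrable_mul_of_integrable_mul_condExp hm hg hD (Filter.Eventually.of_forall hD0)
      (integrable_condExp.congr hbayes)
  have hDg : Integrable (fun ω => D ω * g ω) μ := by simpa only [mul_comm] using hgD
  refine ae_eq_condExp_of_forall_setIntegral_eq hm ((integrable_iff f).2 hDf)
    (fun s _ _ => ((integrable_iff g).2 hDg).integrableOn) (fun s hs _ => ?_)
    hg.aestronglyMeasurable
  calc ∫ ω in s, g ω ∂μ.withDensity (fun ω => ENNReal.ofReal (D ω))
      = ∫ ω in s, μ[fun ω => g ω * D ω|m] ω ∂μ := by
        rw [setIntegral_eq g hs, setIntegral_condExp hm hgD hs]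
        simp only [mul_comm]
    _ = ∫ ω in s, μ[fun ω => D ω * f ω|m] ω ∂μ := by
        refine setIntegral_congr_ae (hm s hs) ?_
        filter_upwards [condExp_mul_of_stronglyMeasurable_left hg hgD hD, hbayes] with ω h1 h2
        exact fun _ => h1.trans h2.symm
    _ = ∫ ω in s, f ω ∂μ.withDensity (fun ω => ENNReal.ofReal (D ω)) := by
        rw [setIntegral_eq f hs, setIntegral_condExp hm hDf hs]

theorem condExp_withDensity_exp_inner {V : Type*} [NormedAddCommGroup V] [InnerProductSpace ℝ V]
    (hm : m ≤ m0) [IsFiniteMeasure μ] {Y Z : Ω → V} (hZ : StronglyMeasurable[m] Z)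
    {ζ η ψζ ψη : V} {φζ φη r κ : ℝ} (hr : 0 < r)
    (hζ : Integrable (fun ω => Real.exp ⟪ζ, Y ω⟫) μ)
    (hη : Integrable (fun ω => Real.exp ⟪η + ζ, Y ω⟫) μ)
    (hcζ : μ[fun ω => Real.exp ⟪ζ, Y ω⟫|m] =ᵐ[μ] fun ω => Real.exp (φζ + ⟪ψζ, Z ω⟫))
    (hcη : μ[fun ω => Real.exp ⟪η + ζ, Y ω⟫|m] =ᵐ[μ] fun ω => Real.exp (φη + ⟪ψη, Z ω⟫)) :
    (μ.withDensity fun ω => ENNReal.ofReal (r * Real.exp ⟪ζ, Y ω⟫))[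
        fun ω => Real.exp (κ + ⟪η, Y ω⟫)|m] =ᵐ[μ]
      fun ω => Real.exp (κ + φη - φζ + ⟪ψη - ψζ, Z ω⟫) := by
  set D : Ω → ℝ := fun ω => r * Real.exp ⟪ζ, Y ω⟫
  have hDpos (ω : Ω) : 0 < D ω := by positivity
  have hDS : (fun ω => D ω * Real.exp (κ + ⟪η, Y ω⟫))
      = fun ω => (r * Real.exp κ) * Real.exp ⟪η + ζ, Y ω⟫ := by
    ext ω
    simp only [D, inner_add_left, Real.exp_add]
    ring
  have hbayes : μ[fun ω => D ω * Real.exp (κ + ⟪η, Y ω⟫)|m] =ᵐ[μ]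
      fun ω => Real.exp (κ + φη - φζ + ⟪ψη - ψζ, Z ω⟫) * μ[D|m] ω := by
    rw [hDS]
    filter_upwards [condExp_smul (μ := μ) (r * Real.exp κ) (fun ω => Real.exp ⟪η + ζ, Y ω⟫) m,
      condExp_smul (μ := μ) r (fun ω => Real.exp ⟪ζ, Y ω⟫) m, hcη, hcζ]
      with ω hη' hζ' hcη' hcζ'
    simp only [Pi.smul_def, smul_eq_mul] at hη' hζ'
    rw [hη', hζ', hcη', hcζ']
    simp only [Real.exp_add, Real.exp_sub, inner_sub_left]
    field_simp
  have hg : StronglyMeasurable[m] fun ω => Real.exp (κ + φη - φζ + ⟪ψη - ψζ, Z ω⟫) :=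
    (by fun_prop : Continuous fun z : V => Real.exp (κ + φη - φζ + ⟪ψη - ψζ, z⟫)
      ).comp_stronglyMeasurable hZ
  have hDint : Integrable D μ := hζ.const_mul r
  have hμ : μ ≪ μ.withDensity fun ω => ENNReal.ofReal (D ω) :=
    withDensity_absolutelyContinuous' hDint.1.aemeasurable.ennreal_ofReal
      (Filter.Eventually.of_forall fun ω => (ENNReal.ofReal_pos.2 (hDpos ω)).ne')
  refine (hμ.ae_eq (ae_eq_condExp_withDensity_of_condExp_mul_eq hm hDint
    (fun ω => (hDpos ω).le) hg ?_ hbayes)).symm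
  rw [hDS]
  exact hη.const_mul _

end MeasureTheory

theorem stmt_4_general
    {V : Type*} [NormedAddCommGroup V] [InnerProductSpace ℝ V]
    {Ω : Type*} {m0 : MeasurableSpace Ω} (Q : Measure Ω) [IsProbabilityMeasure Q]
    (𝕋 : ℝ) (ℱ : Filtration ℝ m0)
    (m : ℕ)
    -- the driving affine process `X`, adapted, with characteristic exponents `φ, ψ`:
    -- for every exponent `ζ ∈ 𝔘_T`, `E[e^{⟨ζ,X_T⟩} | F_t] = e^{φ(T-t,ζ) + ⟨ψ(T-t,ζ),X_t⟩}`
    (X : ℝ → Ω → V)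
    (hXadapt : ∀ t, StronglyMeasurable[ℱ t] (X t))
    (φ : ℝ → V → ℝ) (ψ : ℝ → V → V)
    (haff : ∀ (ζ : V) (t T : ℝ), 0 ≤ t → t ≤ T → T ≤ 𝕋 →
      (∀ s, s ∈ Set.Icc 0 T → Integrable (fun ω => Real.exp ⟪ζ, X s ω⟫) Q) →
      Q[fun ω => Real.exp ⟪ζ, X T ω⟫ | ℱ t] =ᵐ[Q]
        fun ω => Real.exp (φ (T - t) ζ + ⟪ψ (T - t) ζ, X t ω⟫))
    -- the model functions `u = (u_0, u_1, …, u_m)` and `v = (v_0, v_1, …, v_m)`, with the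
    -- admissibility conditions `u_0(t) ∈ 𝔘_t` and `u_i(t) + u_0(t) ∈ 𝔘_t`
    (u0 : ℝ → V) (u : Fin m → ℝ → V) (v0 : ℝ → ℝ) (v : Fin m → ℝ → ℝ)
    (hu0 : ∀ t, t ∈ Set.Icc 0 𝕋 → ∀ s, s ∈ Set.Icc 0 t →
      Integrable (fun ω => Real.exp ⟪u0 t, X s ω⟫) Q)
    (hu : ∀ (i : Fin m) t, t ∈ Set.Icc 0 𝕋 → ∀ s, s ∈ Set.Icc 0 t →
      Integrable (fun ω => Real.exp ⟪u i t + u0 t, X s ω⟫) Q)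
    -- the numéraire: `log B_t = -v_0(t) - ⟨u_0(t), X_t⟩`
    (B : ℝ → Ω → ℝ)
    (hB : ∀ t, t ∈ Set.Icc 0 𝕋 → ∀ ω, B t ω = Real.exp (-(v0 t) - ⟪u0 t, X t ω⟫))
    -- the spot multiplicative spreads: `log S^{δ i}(t,t) = v_i(t) + ⟨u_i(t), X_t⟩`
    (S : Fin m → ℝ → ℝ → Ω → ℝ)
    (hS : ∀ (i : Fin m) t, t ∈ Set.Icc 0 𝕋 → ∀ ω,
      S i t t ω = Real.exp (v i t + ⟪u i t, X t ω⟫))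
    -- OIS bond prices: `B(t,T) = B_t E[1/B_T | F_t]`
    (P : ℝ → ℝ → Ω → ℝ)
    (hbond : ∀ t T, 0 ≤ t → t ≤ T → T ≤ 𝕋 →
      P t T =ᵐ[Q] fun ω => B t ω * (Q[fun ω' => (B T ω')⁻¹ | ℱ t]) ω)
    -- forward spreads: `S^{δ i}(t,T) = E^{Q^T}[S^{δ i}(T,T) | F_t]` under the `T`-forward
    -- measure `dQ^T/dQ = 1/(B_T B(0,T))`
    (hspread : ∀ (i : Fin m) t T, 0 ≤ t → t ≤ T → T ≤ 𝕋 →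
      S i t T =ᵐ[Q]
        (Q.withDensity (fun ω =>
            ENNReal.ofReal ((B T ω * ∫ ω', (B T ω')⁻¹ ∂Q)⁻¹)))[
          fun ω => S i T T ω | ℱ t])
    -- conclusion, for all `0 ≤ t ≤ T ≤ 𝕋` and `i = 1,…,m`:
    (t T : ℝ) (ht : 0 ≤ t) (htT : t ≤ T) (hT𝕋 : T ≤ 𝕋) :
    ((fun ω => P t T ω / B t ω) =ᵐ[Q]
      fun ω => Real.exp (v0 T + φ (T - t) (u0 T) + ⟪ψ (T - t) (u0 T), X t ω⟫)) ∧
    ∀ i : Fin m,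
      S i t T =ᵐ[Q]
        fun ω => Real.exp (v i T + φ (T - t) (u i T + u0 T) - φ (T - t) (u0 T) +
          ⟪ψ (T - t) (u i T + u0 T) - ψ (T - t) (u0 T), X t ω⟫) := by
  have hT : 0 ≤ T := ht.trans htT
  have hTmem : T ∈ Set.Icc 0 𝕋 := ⟨hT, hT𝕋⟩
  have hBinv : (fun ω => (B T ω)⁻¹) = fun ω => Real.exp (v0 T) * Real.exp ⟪u0 T, X T ω⟫ := by
    ext ω
    rw [hB T hTmem, ← Real.exp_neg, ← Real.exp_add]
    ring_nf
  have hcond0 := haff (u0 T) t T ht htT hT𝕋 (hu0 T hTmem)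
  refine ⟨?_, fun i => ?_⟩
  · have hBt (ω : Ω) : B t ω ≠ 0 := by
      rw [hB t ⟨ht, htT.trans hT𝕋⟩]
      exact (Real.exp_pos _).ne'
    have hPT := hbond t T ht htT hT𝕋
    rw [hBinv] at hPT
    filter_upwards [hPT, condExp_smul (μ := Q) (Real.exp (v0 T))
      (fun ω => Real.exp ⟪u0 T, X T ω⟫) (ℱ t), hcond0] with ω hP hsmul hcond
    simp only [Pi.smul_def, smul_eq_mul] at hsmul
    rw [hP, mul_div_cancel_left₀ _ (hBt ω), hsmul, hcond, ← Real.exp_add, add_assoc]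
  · refine (hspread i t T ht htT hT𝕋).trans ?_
    set c := ∫ ω, (B T ω)⁻¹ ∂Q
    have hc : 0 < c := by
      simp_rw [c, hBinv, ← Real.exp_add]
      refine integral_exp_pos ?_
      simpa only [Real.exp_add] using
        (hu0 T hTmem T ⟨hT, le_rfl⟩).const_mul (Real.exp (v0 T))
    have hdensity (ω : Ω) :
        (B T ω * c)⁻¹ = c⁻¹ * Real.exp (v0 T) * Real.exp ⟪u0 T, X T ω⟫ := by
      rw [mul_inv, congrFun hBinv ω]
      ring
    simp_rw [hdensity, hS i T hTmem]
    exact condExp_withDensity_exp_inner (ℱ.le t) (hXadapt t) (by positivity)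
      (hu0 T hTmem T ⟨hT, le_rfl⟩) (hu i T hTmem T ⟨hT, le_rfl⟩) hcond0
      (haff _ t T ht htT hT𝕋 (hu i T hTmem))

/-- Let `(X,u,v)` be an affine multi-curve model.  Then `X` generates
exponentially affine OIS bond prices and spreads:
`B(t,T)/B_t = exp(A^0(t,T) + ⟨B^0(t,T),X_t⟩)` and
`S^{δ i}(t,T) = exp(A^i(t,T) + ⟨B^i(t,T),X_t⟩)`, where
`A^0(t,T) = v_0(T) + φ(T-t,u_0(T))`, `B^0(t,T) = ψ(T-t,u_0(T))`,
`A^i(t,T) = v_i(T) + φ(T-t,u_i(T)+u_0(T)) - φ(T-t,u_0(T))` and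
`B^i(t,T) = ψ(T-t,u_i(T)+u_0(T)) - ψ(T-t,u_0(T))`, with `φ, ψ` the characteristic exponents
of the affine process `X`. -/
theorem stmt_4
    {V : Type*} [NormedAddCommGroup V] [InnerProductSpace ℝ V] [FiniteDimensional ℝ V]
    [MeasurableSpace V] [BorelSpace V]
    {Ω : Type*} {m0 : MeasurableSpace Ω} (Q : Measure Ω) [IsProbabilityMeasure Q]
    (𝕋 : ℝ) (ℱ : Filtration ℝ m0)
    (m : ℕ)
    -- the driving affine process `X`, adapted, with characteristic exponents `φ, ψ`:
    -- for every exponent `ζ ∈ 𝔘_T`, `E[e^{⟨ζ,X_T⟩} | F_t] = e^{φ(T-t,ζ) + ⟨ψ(T-t,ζ),X_t⟩}`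
    (X : ℝ → Ω → V)
    (hXadapt : ∀ t, StronglyMeasurable[ℱ t] (X t))
    (φ : ℝ → V → ℝ) (ψ : ℝ → V → V)
    (haff : ∀ (ζ : V) (t T : ℝ), 0 ≤ t → t ≤ T → T ≤ 𝕋 →
      (∀ s, s ∈ Set.Icc 0 T → Integrable (fun ω => Real.exp ⟪ζ, X s ω⟫) Q) →
      Q[fun ω => Real.exp ⟪ζ, X T ω⟫ | ℱ t] =ᵐ[Q]
        fun ω => Real.exp (φ (T - t) ζ + ⟪ψ (T - t) ζ, X t ω⟫))
    -- the model functions `u = (u_0, u_1, …, u_m)` and `v = (v_0, v_1, …, v_m)`, with the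
    -- admissibility conditions `u_0(t) ∈ 𝔘_t` and `u_i(t) + u_0(t) ∈ 𝔘_t`
    (u0 : ℝ → V) (u : Fin m → ℝ → V) (v0 : ℝ → ℝ) (v : Fin m → ℝ → ℝ)
    (hu0 : ∀ t, t ∈ Set.Icc 0 𝕋 → ∀ s, s ∈ Set.Icc 0 t →
      Integrable (fun ω => Real.exp ⟪u0 t, X s ω⟫) Q)
    (hu : ∀ (i : Fin m) t, t ∈ Set.Icc 0 𝕋 → ∀ s, s ∈ Set.Icc 0 t →
      Integrable (fun ω => Real.exp ⟪u i t + u0 t, X s ω⟫) Q)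
    -- the numéraire: `log B_t = -v_0(t) - ⟨u_0(t), X_t⟩`
    (B : ℝ → Ω → ℝ)
    (hB : ∀ t, t ∈ Set.Icc 0 𝕋 → ∀ ω, B t ω = Real.exp (-(v0 t) - ⟪u0 t, X t ω⟫))
    -- the spot multiplicative spreads: `log S^{δ i}(t,t) = v_i(t) + ⟨u_i(t), X_t⟩`
    (S : Fin m → ℝ → ℝ → Ω → ℝ)
    (hS : ∀ (i : Fin m) t, t ∈ Set.Icc 0 𝕋 → ∀ ω,
      S i t t ω = Real.exp (v i t + ⟪u i t, X t ω⟫))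
    -- OIS bond prices: `B(t,T) = B_t E[1/B_T | F_t]`
    (P : ℝ → ℝ → Ω → ℝ)
    (hbond : ∀ t T, 0 ≤ t → t ≤ T → T ≤ 𝕋 →
      P t T =ᵐ[Q] fun ω => B t ω * (Q[fun ω' => (B T ω')⁻¹ | ℱ t]) ω)
    -- forward spreads: `S^{δ i}(t,T) = E^{Q^T}[S^{δ i}(T,T) | F_t]` under the `T`-forward
    -- measure `dQ^T/dQ = 1/(B_T B(0,T))`
    (hspread : ∀ (i : Fin m) t T, 0 ≤ t → t ≤ T → T ≤ 𝕋 →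
      S i t T =ᵐ[Q]
        (Q.withDensity (fun ω =>
            ENNReal.ofReal ((B T ω * ∫ ω', (B T ω')⁻¹ ∂Q)⁻¹)))[
          fun ω => S i T T ω | ℱ t])
    -- conclusion, for all `0 ≤ t ≤ T ≤ 𝕋` and `i = 1,…,m`:
    (t T : ℝ) (ht : 0 ≤ t) (htT : t ≤ T) (hT𝕋 : T ≤ 𝕋) :
    ((fun ω => P t T ω / B t ω) =ᵐ[Q]
      fun ω => Real.exp (v0 T + φ (T - t) (u0 T) + ⟪ψ (T - t) (u0 T), X t ω⟫)) ∧
    ∀ i : Fin m,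
      S i t T =ᵐ[Q]
        fun ω => Real.exp (v i T + φ (T - t) (u i T + u0 T) - φ (T - t) (u0 T) +
          ⟪ψ (T - t) (u i T + u0 T) - ψ (T - t) (u0 T), X t ω⟫) :=
  stmt_4_general Q 𝕋 ℱ m X hXadapt φ ψ haff u0 u v0 v hu0 hu B hB S hS P hbond hspread t T ht htT
    hT𝕋
end

section
/- Let X be an affine process and suppose X generates exponentially affine OIS bond prices and spreads, i.e., B(t,T)/B_t = exp(A^0(t,T) + ⟨B^0(t,T), X_t⟩) and S^{δ_i}(t,T) = exp(A^i(t,T) + ⟨B^i(t,T), X_t⟩) for all 0 ≤ t ≤ T ≤ 𝕋 and i = 1,…,m, for some functions A^i : [0,𝕋]² → ℝ and B^i : [0,𝕋]² → V. Then (X,u,v) is an affine multi-curve model with v_0(t) = A^0(t,t), u_0(t) = B^0(t,t), v_i(t) = A^i(t,t), u_i(t) = B^i(t,t): namely, log B_t = −A^0(t,t) − ⟨B^0(t,t), X_t⟩ and log S^{δ_i}(t,t) = A^i(t,t) + ⟨B^i(t,t), X_t⟩ for all t, and moreover the admissibility conditions hold: E[e^{⟨B^0(T,T), X_T⟩}]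 < ∞ and E[e^{⟨B^i(T,T)+B^0(T,T), X_T⟩}] < ∞ for all T ∈ [0,𝕋] and i = 1,…,m (i.e., u_0(T) ∈ 𝔘_T and u_i(T)+u_0(T) ∈ 𝔘_T). -/
open MeasureTheory RealInnerProductSpace

/-!
Evaluating the exponentially affine bond prices on the diagonal, where `B(T,T) = 1`, gives
`1 / B_T = exp(A^0(T,T) + ⟨B^0(T,T), X_T⟩)`; taking logarithms yields the numéraire, and the
spreads are read off the diagonal directly. The exponential moments are, up to positive
constant factors, the integrable quantities `1 / B_T` and `S^{δ_i}(T,T) / B_T`.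
-/

lemma Real.log_eq_neg_of_inv_eq_exp {x y : ℝ} (h : x⁻¹ = Real.exp y) : Real.log x = -y := by
  rw [← Real.log_exp y, ← h, Real.log_inv, neg_neg]

lemma Real.exp_add_inner_mul_exp_add_inner {V : Type*} [NormedAddCommGroup V]
    [InnerProductSpace ℝ V] (a b : ℝ) (u v x : V) :
    Real.exp (a + ⟪u, x⟫) * Real.exp (b + ⟪v, x⟫) = Real.exp ((a + b) + ⟪u + v, x⟫) := by
  rw [← Real.exp_add, inner_add_left]
  ring_nf

lemma MeasureTheory.Integrable.of_exp_const_add {Ω : Type*} {m0 : MeasurableSpace Ω}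
    {μ : Measure Ω} {f : Ω → ℝ} (c : ℝ) (h : Integrable (fun ω => Real.exp (c + f ω)) μ) :
    Integrable (fun ω => Real.exp (f ω)) μ := by
  have hf : (fun ω => Real.exp (f ω)) = fun ω => Real.exp (-c) * Real.exp (c + f ω) := by
    funext ω
    rw [← Real.exp_add, neg_add_cancel_left]
  rw [hf]
  exact h.const_mul _

theorem stmt_5_general
    {V : Type*} [NormedAddCommGroup V] [InnerProductSpace ℝ V]
    {Ω : Type*} {m0 : MeasurableSpace Ω} (Q : Measure Ω)
    (𝕋 : ℝ)
    (m : ℕ)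
    -- the driving (affine) process `X`, adapted, with characteristic exponents `φ, ψ`
    (X : ℝ → Ω → V)
    -- the numéraire: strictly positive, adapted, `B_0 = 1`
    (B : ℝ → Ω → ℝ)
    -- OIS bond prices: `B(T,T) = 1`, `B(t,T) = B_t E[1/B_T | F_t]` (with `1/B_T` integrable)
    (P : ℝ → ℝ → Ω → ℝ)
    (hPTT : ∀ T ω, P T T ω = 1)
    (hBint : ∀ T, T ∈ Set.Icc 0 𝕋 → Integrable (fun ω => (B T ω)⁻¹) Q)
    -- spreads: positive, with `S^{δ i}(T,T)/B_T` integrable, satisfying the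
    -- `T`-forward-measure martingale property, with `dQ^T/dQ = 1/(B_T B(0,T))`
    (S : Fin m → ℝ → ℝ → Ω → ℝ)
    (hSint : ∀ (i : Fin m) T, T ∈ Set.Icc 0 𝕋 →
      Integrable (fun ω => S i T T ω / B T ω) Q)
    -- hypothesis: exponentially affine OIS bond prices and spreads
    (A0 : ℝ → ℝ → ℝ) (B0 : ℝ → ℝ → V)
    (Ai : Fin m → ℝ → ℝ → ℝ) (Bi : Fin m → ℝ → ℝ → V)
    (hPrep : ∀ t T, 0 ≤ t → t ≤ T → T ≤ 𝕋 → ∀ ω,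
      P t T ω / B t ω = Real.exp (A0 t T + ⟪B0 t T, X t ω⟫))
    (hSrep : ∀ (i : Fin m) t T, 0 ≤ t → t ≤ T → T ≤ 𝕋 → ∀ ω,
      S i t T ω = Real.exp (Ai i t T + ⟪Bi i t T, X t ω⟫)) :
    -- conclusion: `(X,u,v)` is an affine multi-curve model with
    -- `v_0(t) = A^0(t,t)`, `u_0(t) = B^0(t,t)`, `v_i(t) = A^i(t,t)`, `u_i(t) = B^i(t,t)`
    (∀ t, t ∈ Set.Icc 0 𝕋 → ∀ ω,
      Real.log (B t ω) = -(A0 t t) - ⟪B0 t t, X t ω⟫) ∧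
    (∀ (i : Fin m) t, t ∈ Set.Icc 0 𝕋 → ∀ ω,
      Real.log (S i t t ω) = Ai i t t + ⟪Bi i t t, X t ω⟫) ∧
    (∀ T, T ∈ Set.Icc 0 𝕋 →
      Integrable (fun ω => Real.exp ⟪B0 T T, X T ω⟫) Q) ∧
    (∀ (i : Fin m) T, T ∈ Set.Icc 0 𝕋 →
      Integrable (fun ω => Real.exp ⟪Bi i T T + B0 T T, X T ω⟫) Q) := by
  have hBinv : ∀ T ∈ Set.Icc 0 𝕋, ∀ ω,
      (B T ω)⁻¹ = Real.exp (A0 T T + ⟪B0 T T, X T ω⟫) := fun T hT ω => by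
    simpa only [hPTT, one_div] using hPrep T T hT.1 le_rfl hT.2 ω
  have hSdiag : ∀ i, ∀ T ∈ Set.Icc 0 𝕋, ∀ ω,
      S i T T ω = Real.exp (Ai i T T + ⟪Bi i T T, X T ω⟫) := fun i T hT =>
    hSrep i T T hT.1 le_rfl hT.2
  refine ⟨fun t ht ω => ?_, fun i t ht ω => ?_, fun T hT => ?_, fun i T hT => ?_⟩
  · rw [Real.log_eq_neg_of_inv_eq_exp (hBinv t ht ω)]
    ring
  · rw [hSdiag i t ht ω, Real.log_exp]
  · exact (hBint T hT).congr (.of_forall fun ω => hBinv T hT ω) |>.of_exp_const_add (A0 T T)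
  · have hSB : ∀ ω, S i T T ω / B T ω =
        Real.exp ((Ai i T T + A0 T T) + ⟪Bi i T T + B0 T T, X T ω⟫) := fun ω => by
      rw [div_eq_mul_inv, hSdiag i T hT ω, hBinv T hT ω,
        Real.exp_add_inner_mul_exp_add_inner]
    exact ((hSint i T hT).congr (.of_forall hSB)).of_exp_const_add _

/-- Let `X` be an affine process and suppose `X` generates exponentially
affine OIS bond prices and spreads, i.e. `B(t,T)/B_t = exp(A^0(t,T) + ⟨B^0(t,T),X_t⟩)` and
`S^{δ i}(t,T) = exp(A^i(t,T) + ⟨B^i(t,T),X_t⟩)` for all `0 ≤ t ≤ T ≤ 𝕋`.  Then `(X,u,v)` is an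
affine multi-curve model with `v_0(t) = A^0(t,t)`, `u_0(t) = B^0(t,t)`, `v_i(t) = A^i(t,t)`,
`u_i(t) = B^i(t,t)`: namely `log B_t = -A^0(t,t) - ⟨B^0(t,t),X_t⟩` and
`log S^{δ i}(t,t) = A^i(t,t) + ⟨B^i(t,t),X_t⟩`, and the admissibility (exponential moment)
conditions `E[e^{⟨B^0(T,T),X_T⟩}] < ∞` and `E[e^{⟨B^i(T,T)+B^0(T,T),X_T⟩}] < ∞` hold. -/
theorem stmt_5
    {V : Type*} [NormedAddCommGroup V] [InnerProductSpace ℝ V] [FiniteDimensional ℝ V]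
    [MeasurableSpace V] [BorelSpace V]
    {Ω : Type*} {m0 : MeasurableSpace Ω} (Q : Measure Ω) [IsProbabilityMeasure Q]
    (𝕋 : ℝ) (ℱ : Filtration ℝ m0)
    (m : ℕ)
    -- the driving (affine) process `X`, adapted, with characteristic exponents `φ, ψ`
    (X : ℝ → Ω → V)
    (hXadapt : ∀ t, StronglyMeasurable[ℱ t] (X t))
    (φ : ℝ → V → ℝ) (ψ : ℝ → V → V)
    (haff : ∀ (ζ : V) (t T : ℝ), 0 ≤ t → t ≤ T → T ≤ 𝕋 →
      (∀ s, s ∈ Set.Icc 0 T → Integrable (fun ω => Real.exp ⟪ζ, X s ω⟫) Q) →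
      Q[fun ω => Real.exp ⟪ζ, X T ω⟫ | ℱ t] =ᵐ[Q]
        fun ω => Real.exp (φ (T - t) ζ + ⟪ψ (T - t) ζ, X t ω⟫))
    -- the numéraire: strictly positive, adapted, `B_0 = 1`
    (B : ℝ → Ω → ℝ)
    (hBpos : ∀ t ω, 0 < B t ω)
    (hB0 : ∀ ω, B 0 ω = 1)
    (hBadapt : ∀ t, StronglyMeasurable[ℱ t] (B t))
    -- OIS bond prices: `B(T,T) = 1`, `B(t,T) = B_t E[1/B_T | F_t]` (with `1/B_T` integrable)
    (P : ℝ → ℝ → Ω → ℝ)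
    (hPTT : ∀ T ω, P T T ω = 1)
    (hBint : ∀ T, T ∈ Set.Icc 0 𝕋 → Integrable (fun ω => (B T ω)⁻¹) Q)
    (hbond : ∀ t T, 0 ≤ t → t ≤ T → T ≤ 𝕋 →
      P t T =ᵐ[Q] fun ω => B t ω * (Q[fun ω' => (B T ω')⁻¹ | ℱ t]) ω)
    -- spreads: positive, with `S^{δ i}(T,T)/B_T` integrable, satisfying the
    -- `T`-forward-measure martingale property, with `dQ^T/dQ = 1/(B_T B(0,T))`
    (S : Fin m → ℝ → ℝ → Ω → ℝ)
    (hSpos : ∀ i t T ω, 0 < S i t T ω)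
    (hSint : ∀ (i : Fin m) T, T ∈ Set.Icc 0 𝕋 →
      Integrable (fun ω => S i T T ω / B T ω) Q)
    (hspread : ∀ (i : Fin m) t T, 0 ≤ t → t ≤ T → T ≤ 𝕋 →
      S i t T =ᵐ[Q]
        (Q.withDensity (fun ω =>
            ENNReal.ofReal ((B T ω * ∫ ω', (B T ω')⁻¹ ∂Q)⁻¹)))[
          fun ω => S i T T ω | ℱ t])
    -- hypothesis: exponentially affine OIS bond prices and spreads
    (A0 : ℝ → ℝ → ℝ) (B0 : ℝ → ℝ → V)
    (Ai : Fin m → ℝ → ℝ → ℝ) (Bi : Fin m → ℝ → ℝ → V)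
    (hPrep : ∀ t T, 0 ≤ t → t ≤ T → T ≤ 𝕋 → ∀ ω,
      P t T ω / B t ω = Real.exp (A0 t T + ⟪B0 t T, X t ω⟫))
    (hSrep : ∀ (i : Fin m) t T, 0 ≤ t → t ≤ T → T ≤ 𝕋 → ∀ ω,
      S i t T ω = Real.exp (Ai i t T + ⟪Bi i t T, X t ω⟫)) :
    -- conclusion: `(X,u,v)` is an affine multi-curve model with
    -- `v_0(t) = A^0(t,t)`, `u_0(t) = B^0(t,t)`, `v_i(t) = A^i(t,t)`, `u_i(t) = B^i(t,t)`
    (∀ t, t ∈ Set.Icc 0 𝕋 → ∀ ω,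
      Real.log (B t ω) = -(A0 t t) - ⟪B0 t t, X t ω⟫) ∧
    (∀ (i : Fin m) t, t ∈ Set.Icc 0 𝕋 → ∀ ω,
      Real.log (S i t t ω) = Ai i t t + ⟪Bi i t t, X t ω⟫) ∧
    (∀ T, T ∈ Set.Icc 0 𝕋 →
      Integrable (fun ω => Real.exp ⟪B0 T T, X T ω⟫) Q) ∧
    (∀ (i : Fin m) T, T ∈ Set.Icc 0 𝕋 →
      Integrable (fun ω => Real.exp ⟪Bi i T T + B0 T T, X T ω⟫) Q) :=
  stmt_5_general (m0 := m0) Q 𝕋 m X B P hPTT hBint S hSint A0 B0 Ai Bi hPrep hSrep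
end

section
/- Let (X,u,v) be an affine multi-curve model where X = (X^0, Z) takes values in D = D_{X^0} × C_Z with C_Z a closed convex cone. Suppose v_i(t) ≥ 0 for all t ∈ [0,𝕋] and i = 1,…,m, and each u_i has the form u_i = (0, w_i) with w_i : [0,𝕋] → C_Z^*, where C_Z^* is the dual cone of C_Z. Then S^{δ_i}(t,T) ≥ 1 almost surely for all 0 ≤ t ≤ T ≤ 𝕋 and i = 1,…,m. -/
open MeasureTheory RealInnerProductSpace

theorem MeasureTheory.ae_const_le_condExp {Ω : Type*} {m m0 : MeasurableSpace Ω} {μ : Measure Ω}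
    [IsFiniteMeasure μ] (hm : m ≤ m0) {f : Ω → ℝ} (hf : Integrable f μ) {c : ℝ}
    (hc : ∀ᵐ ω ∂μ, c ≤ f ω) : ∀ᵐ ω ∂μ, c ≤ μ[f|m] ω := by
  filter_upwards [condExp_mono (m := m) (integrable_const c) hf hc] with ω hω
  rwa [condExp_const hm] at hω

theorem one_le_exp_add_inner {W : Type*} [NormedAddCommGroup W] [InnerProductSpace ℝ W]
    {C : Set W} {v : ℝ} {w z : W} (hv : 0 ≤ v) (hw : ∀ y ∈ C, 0 ≤ ⟪w, y⟫) (hz : z ∈ C) :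
    1 ≤ Real.exp (v + ⟪w, z⟫) :=
  Real.one_le_exp (add_nonneg hv (hw z hz))

theorem stmt_6_general
    {W : Type*} [NormedAddCommGroup W] [InnerProductSpace ℝ W]
    {Ω : Type*} {m0 : MeasurableSpace Ω} (Q : Measure Ω)
    (𝕋 : ℝ) (ℱ : Filtration ℝ m0)
    (m : ℕ)
    -- the closed convex cone `C_Z ⊆ W`
    (C : Set W)
    -- the cone-valued component `Z` of the driving process `X = (X⁰, Z)`
    (Z : ℝ → Ω → W) (hZ : ∀ t, t ∈ Set.Icc 0 𝕋 → ∀ ω, Z t ω ∈ C)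
    -- the model functions: `v_i ≥ 0` and `w_i` take values in the dual cone `C_Z^*`
    (v : Fin m → ℝ → ℝ) (w : Fin m → ℝ → W)
    (hv : ∀ (i : Fin m) t, t ∈ Set.Icc 0 𝕋 → 0 ≤ v i t)
    (hw : ∀ (i : Fin m) t, t ∈ Set.Icc 0 𝕋 → ∀ z ∈ C, 0 ≤ ⟪w i t, z⟫)
    -- the `T`-forward measures: probability measures equivalent to `Q`
    (QT : ℝ → Measure Ω) [∀ T, IsProbabilityMeasure (QT T)]
    (hQT : ∀ T, T ∈ Set.Icc 0 𝕋 → QT T ≪ Q ∧ Q ≪ QT T)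
    -- the spreads: `S^{δ i}(T,T) = exp(v_i(T) + ⟨w_i(T), Z_T⟩)` is `Q^T`-integrable and
    -- `S^{δ i}(t,T) = E^{Q^T}[S^{δ i}(T,T) | F_t]`
    (S : Fin m → ℝ → ℝ → Ω → ℝ)
    (hSint : ∀ (i : Fin m) T, T ∈ Set.Icc 0 𝕋 →
      Integrable (fun ω => Real.exp (v i T + ⟪w i T, Z T ω⟫)) (QT T))
    (hS : ∀ (i : Fin m) t T, 0 ≤ t → t ≤ T → T ≤ 𝕋 →
      S i t T =ᵐ[QT T]
        (QT T)[fun ω => Real.exp (v i T + ⟪w i T, Z T ω⟫) | ℱ t])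
    -- conclusion:
    (i : Fin m) (t T : ℝ) (ht : 0 ≤ t) (htT : t ≤ T) (hT𝕋 : T ≤ 𝕋) :
    ∀ᵐ ω ∂Q, 1 ≤ S i t T ω := by
  have hT : T ∈ Set.Icc 0 𝕋 := ⟨ht.trans htT, hT𝕋⟩
  have hspot : ∀ ω, 1 ≤ Real.exp (v i T + ⟪w i T, Z T ω⟫) := fun ω =>
    one_le_exp_add_inner (hv i T hT) (hw i T hT) (hZ T hT ω)
  have hforward : ∀ᵐ ω ∂(QT T), 1 ≤ S i t T ω := by
    filter_upwards [hS i t T ht htT hT𝕋,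
      ae_const_le_condExp (ℱ.le t) (hSint i T hT) (.of_forall hspot)] with ω hSω hω
    rwa [hSω]
  exact (hQT T hT).2 hforward

/-- Let `(X,u,v)` be an affine multi-curve model where `X = (X⁰, Z)` takes
values in `D = D_{X⁰} × C_Z` with `C_Z` a closed convex cone.  Suppose `v_i(t) ≥ 0` for all
`t ∈ [0,𝕋]` and `i = 1,…,m`, and each `u_i` has the form `u_i = (0, w_i)` with
`w_i : [0,𝕋] → C_Z^*`, the dual cone of `C_Z`.  Then `S^{δ i}(t,T) ≥ 1` almost surely for all
`0 ≤ t ≤ T ≤ 𝕋` and `i = 1,…,m`.  (Since `u_i = (0,w_i)`, the spot spread is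
`S^{δ i}(t,t) = exp(v_i(t) + ⟨w_i(t), Z_t⟩)` and the forward spread is its conditional
expectation under the `T`-forward measure `Q^T`, a probability measure equivalent to `Q`.) -/
theorem stmt_6
    {W : Type*} [NormedAddCommGroup W] [InnerProductSpace ℝ W]
    {Ω : Type*} {m0 : MeasurableSpace Ω} (Q : Measure Ω) [IsProbabilityMeasure Q]
    (𝕋 : ℝ) (ℱ : Filtration ℝ m0)
    (m : ℕ)
    -- the closed convex cone `C_Z ⊆ W`
    (C : Set W) (hCclosed : IsClosed C) (hCconv : Convex ℝ C)
    (hCcone : ∀ z ∈ C, ∀ c : ℝ, 0 ≤ c → c • z ∈ C)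
    -- the cone-valued component `Z` of the driving process `X = (X⁰, Z)`
    (Z : ℝ → Ω → W) (hZ : ∀ t, t ∈ Set.Icc 0 𝕋 → ∀ ω, Z t ω ∈ C)
    -- the model functions: `v_i ≥ 0` and `w_i` take values in the dual cone `C_Z^*`
    (v : Fin m → ℝ → ℝ) (w : Fin m → ℝ → W)
    (hv : ∀ (i : Fin m) t, t ∈ Set.Icc 0 𝕋 → 0 ≤ v i t)
    (hw : ∀ (i : Fin m) t, t ∈ Set.Icc 0 𝕋 → ∀ z ∈ C, 0 ≤ ⟪w i t, z⟫)
    -- the `T`-forward measures: probability measures equivalent to `Q`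
    (QT : ℝ → Measure Ω) [∀ T, IsProbabilityMeasure (QT T)]
    (hQT : ∀ T, T ∈ Set.Icc 0 𝕋 → QT T ≪ Q ∧ Q ≪ QT T)
    -- the spreads: `S^{δ i}(T,T) = exp(v_i(T) + ⟨w_i(T), Z_T⟩)` is `Q^T`-integrable and
    -- `S^{δ i}(t,T) = E^{Q^T}[S^{δ i}(T,T) | F_t]`
    (S : Fin m → ℝ → ℝ → Ω → ℝ)
    (hSint : ∀ (i : Fin m) T, T ∈ Set.Icc 0 𝕋 →
      Integrable (fun ω => Real.exp (v i T + ⟪w i T, Z T ω⟫)) (QT T))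
    (hS : ∀ (i : Fin m) t T, 0 ≤ t → t ≤ T → T ≤ 𝕋 →
      S i t T =ᵐ[QT T]
        (QT T)[fun ω => Real.exp (v i T + ⟪w i T, Z T ω⟫) | ℱ t])
    -- conclusion:
    (i : Fin m) (t T : ℝ) (ht : 0 ≤ t) (htT : t ≤ T) (hT𝕋 : T ≤ 𝕋) :
    ∀ᵐ ω ∂Q, 1 ≤ S i t T ω :=
  stmt_6_general Q 𝕋 ℱ m C Z hZ v w hv hw QT hQT S hSint hS i t T ht htT hT𝕋
end

section
/- Let (X,u,v) be an affine multi-curve model where X = (X^0, Z) takes values in D = D_{X^0} × C_Z with C_Z a closed convex cone, v_i(t) ≥ 0 and u_i = (0, w_i) with w_i : [0,𝕋] → C_Z^* for i = 1,…,m. If in addition v_1(t) ≤ v_2(t) ≤ … ≤ v_m(t) and w_2(t) − w_1(t) ∈ C_Z^*, …, w_m(t) − w_{m−1}(t) ∈ C_Z^* for all t ∈ [0,𝕋], then the spreads are ordered with respect to the tenor: S^{δ_1}(t,T) ≤ S^{δ_2}(t,T) ≤ … ≤ S^{δ_m}(t,T) almost surely for all 0 ≤ t ≤ T ≤ 𝕋.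 -/
open MeasureTheory RealInnerProductSpace

/-! On the cone `C_Z` the terminal spreads `exp (v_i(T) + ⟪w_i(T), Z_T⟫)` increase with the
tenor index pointwise, because `v_i` and `⟪w_i, z⟫` (for `z ∈ C_Z`) increase step by step.
Conditional expectation under `Q^T` is monotone, and `Q ≪ Q^T` carries the resulting
`Q^T`-a.s. inequality back to `Q`. -/

theorem Fin.monotone_of_forall_le_succ {α : Type*} [Preorder α] {m : ℕ} (f : Fin m → α)
    (h : ∀ (k : ℕ) (hk : k + 1 < m), f ⟨k, Nat.lt_of_succ_lt hk⟩ ≤ f ⟨k + 1, hk⟩) :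
    Monotone f := by
  cases m with
  | zero => exact fun a => a.elim0
  | succ n => exact Fin.monotone_iff_le_succ.2 fun k => h k (by omega)

theorem ae_le_of_ae_eq_condExp {Ω : Type*} {m m0 : MeasurableSpace Ω} {μ : Measure Ω}
    {f g F G : Ω → ℝ} (hf : Integrable f μ) (hg : Integrable g μ) (hfg : f ≤ᵐ[μ] g)
    (hF : F =ᵐ[μ] μ[f|m]) (hG : G =ᵐ[μ] μ[g|m]) :
    F ≤ᵐ[μ] G := by
  filter_upwards [hF, hG, condExp_mono hf hg hfg (m := m)] with ω hFω hGω hω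
  rw [hFω, hGω]
  exact hω

theorem stmt_7_general
    {W : Type*} [NormedAddCommGroup W] [InnerProductSpace ℝ W]
    {Ω : Type*} {m0 : MeasurableSpace Ω} (Q : Measure Ω)
    (𝕋 : ℝ) (ℱ : Filtration ℝ m0)
    (m : ℕ)
    -- the closed convex cone `C_Z ⊆ W`
    (C : Set W)
    -- the cone-valued component `Z` of the driving process `X = (X⁰, Z)`
    (Z : ℝ → Ω → W) (hZ : ∀ t, t ∈ Set.Icc 0 𝕋 → ∀ ω, Z t ω ∈ C)
    (v : Fin m → ℝ → ℝ) (w : Fin m → ℝ → W)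
    -- ordering of the model functions: `v_1(t) ≤ … ≤ v_m(t)` and the consecutive differences
    -- `w_{k+1}(t) - w_k(t)` lie in the dual cone `C_Z^*`
    (hvord : ∀ (k : ℕ) (hk : k + 1 < m), ∀ t, t ∈ Set.Icc 0 𝕋 →
      v ⟨k, Nat.lt_of_succ_lt hk⟩ t ≤ v ⟨k + 1, hk⟩ t)
    (hword : ∀ (k : ℕ) (hk : k + 1 < m), ∀ t, t ∈ Set.Icc 0 𝕋 → ∀ z ∈ C,
      0 ≤ ⟪w ⟨k + 1, hk⟩ t - w ⟨k, Nat.lt_of_succ_lt hk⟩ t, z⟫)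
    -- the `T`-forward measures: probability measures equivalent to `Q`
    (QT : ℝ → Measure Ω)
    (hQT : ∀ T, T ∈ Set.Icc 0 𝕋 → QT T ≪ Q ∧ Q ≪ QT T)
    -- the spreads: `S^{δ i}(T,T) = exp(v_i(T) + ⟨w_i(T), Z_T⟩)` is `Q^T`-integrable and
    -- `S^{δ i}(t,T) = E^{Q^T}[S^{δ i}(T,T) | F_t]`
    (S : Fin m → ℝ → ℝ → Ω → ℝ)
    (hSint : ∀ (i : Fin m) T, T ∈ Set.Icc 0 𝕋 →
      Integrable (fun ω => Real.exp (v i T + ⟪w i T, Z T ω⟫)) (QT T))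
    (hS : ∀ (i : Fin m) t T, 0 ≤ t → t ≤ T → T ≤ 𝕋 →
      S i t T =ᵐ[QT T]
        (QT T)[fun ω => Real.exp (v i T + ⟪w i T, Z T ω⟫) | ℱ t])
    -- conclusion: the spreads are ordered with respect to the tenor
    (i j : Fin m) (hij : i ≤ j)
    (t T : ℝ) (ht : 0 ≤ t) (htT : t ≤ T) (hT𝕋 : T ≤ 𝕋) :
    ∀ᵐ ω ∂Q, S i t T ω ≤ S j t T ω := by
  have hT : T ∈ Set.Icc 0 𝕋 := ⟨ht.trans htT, hT𝕋⟩
  have hv_mono : Monotone fun k => v k T :=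
    Fin.monotone_of_forall_le_succ _ fun k hk => hvord k hk T hT
  have hw_mono : ∀ z ∈ C, Monotone fun k => ⟪w k T, z⟫ := fun z hz =>
    Fin.monotone_of_forall_le_succ _ fun k hk => by
      simpa only [inner_sub_left, sub_nonneg] using hword k hk T hT z hz
  have h_terminal : (fun ω => Real.exp (v i T + ⟪w i T, Z T ω⟫))
      ≤ᵐ[QT T] fun ω => Real.exp (v j T + ⟪w j T, Z T ω⟫) :=
    Filter.Eventually.of_forall fun ω => Real.exp_le_exp.2 <|
      add_le_add (hv_mono hij) (hw_mono _ (hZ T hT ω) hij)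
  exact (hQT T hT).2.ae_le <| ae_le_of_ae_eq_condExp (hSint i T hT) (hSint j T hT) h_terminal
    (hS i t T ht htT hT𝕋) (hS j t T ht htT hT𝕋)

/-- Let `(X,u,v)` be an affine multi-curve model where `X = (X⁰, Z)` takes
values in `D = D_{X⁰} × C_Z` with `C_Z` a closed convex cone, `v_i(t) ≥ 0` and `u_i = (0,w_i)`
with `w_i : [0,𝕋] → C_Z^*` for `i = 1,…,m`.  If in addition
`v_1(t) ≤ v_2(t) ≤ … ≤ v_m(t)` and `w_{k+1}(t) - w_k(t) ∈ C_Z^*` for all `t ∈ [0,𝕋]`, then the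
spreads are ordered with respect to the tenor:
`S^{δ_1}(t,T) ≤ S^{δ_2}(t,T) ≤ … ≤ S^{δ_m}(t,T)` almost surely for all `0 ≤ t ≤ T ≤ 𝕋`. -/
theorem stmt_7
    {W : Type*} [NormedAddCommGroup W] [InnerProductSpace ℝ W]
    {Ω : Type*} {m0 : MeasurableSpace Ω} (Q : Measure Ω) [IsProbabilityMeasure Q]
    (𝕋 : ℝ) (ℱ : Filtration ℝ m0)
    (m : ℕ)
    -- the closed convex cone `C_Z ⊆ W`
    (C : Set W) (hCclosed : IsClosed C) (hCconv : Convex ℝ C)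
    (hCcone : ∀ z ∈ C, ∀ c : ℝ, 0 ≤ c → c • z ∈ C)
    -- the cone-valued component `Z` of the driving process `X = (X⁰, Z)`
    (Z : ℝ → Ω → W) (hZ : ∀ t, t ∈ Set.Icc 0 𝕋 → ∀ ω, Z t ω ∈ C)
    -- the model functions: `v_i ≥ 0` and `w_i` take values in the dual cone `C_Z^*`
    (v : Fin m → ℝ → ℝ) (w : Fin m → ℝ → W)
    (hv : ∀ (i : Fin m) t, t ∈ Set.Icc 0 𝕋 → 0 ≤ v i t)
    (hw : ∀ (i : Fin m) t, t ∈ Set.Icc 0 𝕋 → ∀ z ∈ C, 0 ≤ ⟪w i t, z⟫)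
    -- ordering of the model functions: `v_1(t) ≤ … ≤ v_m(t)` and the consecutive differences
    -- `w_{k+1}(t) - w_k(t)` lie in the dual cone `C_Z^*`
    (hvord : ∀ (k : ℕ) (hk : k + 1 < m), ∀ t, t ∈ Set.Icc 0 𝕋 →
      v ⟨k, Nat.lt_of_succ_lt hk⟩ t ≤ v ⟨k + 1, hk⟩ t)
    (hword : ∀ (k : ℕ) (hk : k + 1 < m), ∀ t, t ∈ Set.Icc 0 𝕋 → ∀ z ∈ C,
      0 ≤ ⟪w ⟨k + 1, hk⟩ t - w ⟨k, Nat.lt_of_succ_lt hk⟩ t, z⟫)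
    -- the `T`-forward measures: probability measures equivalent to `Q`
    (QT : ℝ → Measure Ω) [∀ T, IsProbabilityMeasure (QT T)]
    (hQT : ∀ T, T ∈ Set.Icc 0 𝕋 → QT T ≪ Q ∧ Q ≪ QT T)
    -- the spreads: `S^{δ i}(T,T) = exp(v_i(T) + ⟨w_i(T), Z_T⟩)` is `Q^T`-integrable and
    -- `S^{δ i}(t,T) = E^{Q^T}[S^{δ i}(T,T) | F_t]`
    (S : Fin m → ℝ → ℝ → Ω → ℝ)
    (hSint : ∀ (i : Fin m) T, T ∈ Set.Icc 0 𝕋 →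
      Integrable (fun ω => Real.exp (v i T + ⟪w i T, Z T ω⟫)) (QT T))
    (hS : ∀ (i : Fin m) t T, 0 ≤ t → t ≤ T → T ≤ 𝕋 →
      S i t T =ᵐ[QT T]
        (QT T)[fun ω => Real.exp (v i T + ⟪w i T, Z T ω⟫) | ℱ t])
    -- conclusion: the spreads are ordered with respect to the tenor
    (i j : Fin m) (hij : i ≤ j)
    (t T : ℝ) (ht : 0 ≤ t) (htT : t ≤ T) (hT𝕋 : T ≤ 𝕋) :
    ∀ᵐ ω ∂Q, S i t T ω ≤ S j t T ω :=
  stmt_7_general Q 𝕋 ℱ m C Z hZ v w hvord hword QT hQT S hSint hS i j hij t T ht htT hT𝕋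
end

section
/- An affine multi-curve model (X,u,v) achieves an exact fit to the initially observed term structures, i.e., B(0,T) = B^M(0,T) and S^{δ_i}(0,T) = S^{M,δ_i}(0,T) for all T ∈ [0,𝕋] and i = 1,…,m, if and only if v_0(t) = log B^M(0,t) − log B^0(0,t) and v_i(t) = log S^{M,δ_i}(0,t) − log S^{0,δ_i}(0,t) for all t ∈ [0,𝕋] and i = 1,…,m, where B^0(0,t) and S^{0,δ_i}(0,t) are the theoretical bond prices and spreads of the model (X,u,0) (all functions v_j set to zero). In particular B(0,t) = e^{v_0(t)} B^0(0,t) and S^{δ_i}(0,t) = e^{v_i(t)} S^{0,δ_i}(0,t), the latter because the density of the t-forward measure, e^{⟨u_0(t),X_t⟩}/E[e^{⟨u_0(t),X_t⟩}], is the same for the models (X,u,v) and (X,u,0). -/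
/-!
Writing `1/B_t = e^{v_0(t)} e^{⟨u_0(t),X_t⟩}` and `S^{δ_i}(t,t) = e^{v_i(t)} e^{⟨u_i(t),X_t⟩}`,
the deterministic factors leave every expectation: `B(0,t) = e^{v_0(t)} B^0(0,t)`, and `e^{v_0(t)}`
cancels from the forward density, so `S^{δ_i}(0,t) = e^{v_i(t)} S^{0,δ_i}(0,t)`. Since `B^0(0,t)`
and `S^{0,δ_i}(0,t)` are expectations of exponentials, they are positive, and for positive `y, z`
the equation `e^v z = y` is equivalent to `v = log y - log z`.
-/

open MeasureTheory RealInnerProductSpace Real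

namespace AffineMultiCurve

variable {Ω : Type*} {m0 : MeasurableSpace Ω}

lemma exp_mul_eq_iff_eq_log_sub {v y z : ℝ} (hy : 0 < y) (hz : 0 < z) :
    exp v * z = y ↔ v = log y - log z := by
  rw [← log_div hy.ne' hz.ne', ← exp_eq_exp (x := v), exp_log (div_pos hy hz), eq_div_iff hz.ne']

lemma integral_exp_const_add (μ : Measure Ω) (c : ℝ) (f : Ω → ℝ) :
    ∫ ω, exp (c + f ω) ∂μ = exp c * ∫ ω, exp (f ω) ∂μ := by
  simp_rw [exp_add]
  exact integral_const_mul _ _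

lemma integral_exp_const_add_mul_density (μ : Measure Ω) (a b Z : ℝ) (f g : Ω → ℝ) :
    ∫ ω, exp (a + f ω) * (exp (b + g ω) / (exp b * Z)) ∂μ =
      exp a * ∫ ω, exp (f ω) * (exp (g ω) / Z) ∂μ := by
  rw [← integral_const_mul]
  congr 1 with ω
  rw [exp_add a, exp_add b, mul_div_mul_left _ _ (exp_pos b).ne']
  ring

lemma integral_exp_mul_density_pos (μ : Measure Ω) [NeZero μ] {Z : ℝ} (hZ : 0 < Z)
    {f g : Ω → ℝ} (hfg : Integrable (fun ω => exp (f ω + g ω)) μ) :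
    0 < ∫ ω, exp (f ω) * (exp (g ω) / Z) ∂μ := by
  have hrewrite : ∫ ω, exp (f ω) * (exp (g ω) / Z) ∂μ = Z⁻¹ * ∫ ω, exp (f ω + g ω) ∂μ := by
    rw [← integral_const_mul]
    congr 1 with ω
    rw [exp_add]
    ring
  rw [hrewrite]
  exact mul_pos (inv_pos.mpr hZ) (integral_exp_pos hfg)

end AffineMultiCurve

open AffineMultiCurve

theorem stmt_8_general
    {V : Type*} [NormedAddCommGroup V] [InnerProductSpace ℝ V]
    {Ω : Type*} {m0 : MeasurableSpace Ω} (Q : Measure Ω) [IsProbabilityMeasure Q]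
    (𝕋 : ℝ) (m : ℕ)
    -- the driving affine process `X`
    (X : ℝ → Ω → V)
    -- the model functions, with the admissibility conditions `u_0(t) ∈ 𝔘_t`,
    -- `u_i(t) + u_0(t) ∈ 𝔘_t` (exponential moments at time `t`)
    (u0 : ℝ → V) (u : Fin m → ℝ → V) (v0 : ℝ → ℝ) (v : Fin m → ℝ → ℝ)
    (hu0int : ∀ t, t ∈ Set.Icc 0 𝕋 →
      Integrable (fun ω => Real.exp ⟪u0 t, X t ω⟫) Q)
    (huint : ∀ (i : Fin m) t, t ∈ Set.Icc 0 𝕋 →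
      Integrable (fun ω => Real.exp ⟪u i t + u0 t, X t ω⟫) Q)
    -- the initially observed market term structures (positive)
    (BM : ℝ → ℝ) (SM : Fin m → ℝ → ℝ)
    (hBM : ∀ t, t ∈ Set.Icc 0 𝕋 → 0 < BM t)
    (hSM : ∀ (i : Fin m) t, t ∈ Set.Icc 0 𝕋 → 0 < SM i t)
    -- the time-0 bond prices and spreads of the model `(X,u,v)`:
    -- `B(0,t) = E[1/B_t]` with `1/B_t = e^{v_0(t)+⟨u_0(t),X_t⟩}`, and
    -- `S^{δ i}(0,t) = E^{Q^t}[S^{δ i}(t,t)]` with `S^{δ i}(t,t) = e^{v_i(t)+⟨u_i(t),X_t⟩}`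
    -- and `dQ^t/dQ = 1/(B_t B(0,t))`
    (Bobs : ℝ → ℝ) (Sobs : Fin m → ℝ → ℝ)
    (hBobs : ∀ t, Bobs t = ∫ ω, Real.exp (v0 t + ⟪u0 t, X t ω⟫) ∂Q)
    (hSobs : ∀ (i : Fin m) t, Sobs i t =
      ∫ ω, Real.exp (v i t + ⟪u i t, X t ω⟫) *
        (Real.exp (v0 t + ⟪u0 t, X t ω⟫) / Bobs t) ∂Q)
    -- the corresponding theoretical quantities of the model `(X,u,0)`
    (B0obs : ℝ → ℝ) (S0obs : Fin m → ℝ → ℝ)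
    (hB0obs : ∀ t, B0obs t = ∫ ω, Real.exp ⟪u0 t, X t ω⟫ ∂Q)
    (hS0obs : ∀ (i : Fin m) t, S0obs i t =
      ∫ ω, Real.exp ⟪u i t, X t ω⟫ *
        (Real.exp ⟪u0 t, X t ω⟫ / B0obs t) ∂Q) :
    -- conclusions: the "in particular" identities and the exact-fit characterization
    (∀ t, t ∈ Set.Icc 0 𝕋 → Bobs t = Real.exp (v0 t) * B0obs t) ∧
    (∀ (i : Fin m) t, t ∈ Set.Icc 0 𝕋 → Sobs i t = Real.exp (v i t) * S0obs i t) ∧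
    ((∀ T, T ∈ Set.Icc 0 𝕋 → Bobs T = BM T ∧ ∀ i : Fin m, Sobs i T = SM i T) ↔
      (∀ t, t ∈ Set.Icc 0 𝕋 →
        v0 t = Real.log (BM t) - Real.log (B0obs t) ∧
        ∀ i : Fin m, v i t = Real.log (SM i t) - Real.log (S0obs i t))) := by
  have hB : ∀ t, Bobs t = exp (v0 t) * B0obs t := fun t => by
    rw [hBobs, hB0obs, integral_exp_const_add]
  have hS : ∀ i t, Sobs i t = exp (v i t) * S0obs i t := fun i t => by
    rw [hSobs, hS0obs, hB, integral_exp_const_add_mul_density]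
  have hB0pos : ∀ t ∈ Set.Icc 0 𝕋, 0 < B0obs t := fun t ht =>
    hB0obs t ▸ integral_exp_pos (hu0int t ht)
  have hS0pos : ∀ i, ∀ t ∈ Set.Icc 0 𝕋, 0 < S0obs i t := fun i t ht => by
    rw [hS0obs]
    refine integral_exp_mul_density_pos Q (hB0pos t ht) ?_
    simpa only [inner_add_left] using huint i t ht
  refine ⟨fun t _ => hB t, fun i t _ => hS i t, forall₂_congr fun t ht => ?_⟩
  simp only [hB, hS]
  exact and_congr (exp_mul_eq_iff_eq_log_sub (hBM t ht) (hB0pos t ht))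
    (forall_congr' fun i => exp_mul_eq_iff_eq_log_sub (hSM i t ht) (hS0pos i t ht))

/-- An affine multi-curve model `(X,u,v)` achieves an exact fit to the
initially observed term structures, i.e. `B(0,T) = B^M(0,T)` and `S^{δ i}(0,T) = S^{M,δ i}(0,T)`
for all `T ∈ [0,𝕋]` and `i`, if and only if `v_0(t) = log B^M(0,t) - log B^0(0,t)` and
`v_i(t) = log S^{M,δ i}(0,t) - log S^{0,δ i}(0,t)`, where `B^0(0,t)` and `S^{0,δ i}(0,t)` are the
theoretical bond prices and spreads of the model `(X,u,0)`.  In particular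
`B(0,t) = e^{v_0(t)} B^0(0,t)` and `S^{δ i}(0,t) = e^{v_i(t)} S^{0,δ i}(0,t)` (the latter because
both models induce the same `t`-forward measure density `e^{⟨u_0(t),X_t⟩}/E[e^{⟨u_0(t),X_t⟩}]`).
Here `B(0,t) = E[1/B_t] = E[e^{v_0(t)+⟨u_0(t),X_t⟩}]`, and
`S^{δ i}(0,t) = E^{Q^t}[S^{δ i}(t,t)]` with `dQ^t/dQ = 1/(B_t B(0,t))`. -/
theorem stmt_8
    {V : Type*} [NormedAddCommGroup V] [InnerProductSpace ℝ V] [FiniteDimensional ℝ V]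
    [MeasurableSpace V] [BorelSpace V]
    {Ω : Type*} {m0 : MeasurableSpace Ω} (Q : Measure Ω) [IsProbabilityMeasure Q]
    (𝕋 : ℝ) (h𝕋 : 0 ≤ 𝕋) (m : ℕ)
    -- the driving affine process `X`
    (X : ℝ → Ω → V) (hXmeas : ∀ t, Measurable (X t))
    -- the model functions, with the admissibility conditions `u_0(t) ∈ 𝔘_t`,
    -- `u_i(t) + u_0(t) ∈ 𝔘_t` (exponential moments at time `t`)
    (u0 : ℝ → V) (u : Fin m → ℝ → V) (v0 : ℝ → ℝ) (v : Fin m → ℝ → ℝ)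
    (hu0int : ∀ t, t ∈ Set.Icc 0 𝕋 →
      Integrable (fun ω => Real.exp ⟪u0 t, X t ω⟫) Q)
    (huint : ∀ (i : Fin m) t, t ∈ Set.Icc 0 𝕋 →
      Integrable (fun ω => Real.exp ⟪u i t + u0 t, X t ω⟫) Q)
    -- the initially observed market term structures (positive)
    (BM : ℝ → ℝ) (SM : Fin m → ℝ → ℝ)
    (hBM : ∀ t, t ∈ Set.Icc 0 𝕋 → 0 < BM t)
    (hSM : ∀ (i : Fin m) t, t ∈ Set.Icc 0 𝕋 → 0 < SM i t)
    -- the time-0 bond prices and spreads of the model `(X,u,v)`: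
    -- `B(0,t) = E[1/B_t]` with `1/B_t = e^{v_0(t)+⟨u_0(t),X_t⟩}`, and
    -- `S^{δ i}(0,t) = E^{Q^t}[S^{δ i}(t,t)]` with `S^{δ i}(t,t) = e^{v_i(t)+⟨u_i(t),X_t⟩}`
    -- and `dQ^t/dQ = 1/(B_t B(0,t))`
    (Bobs : ℝ → ℝ) (Sobs : Fin m → ℝ → ℝ)
    (hBobs : ∀ t, Bobs t = ∫ ω, Real.exp (v0 t + ⟪u0 t, X t ω⟫) ∂Q)
    (hSobs : ∀ (i : Fin m) t, Sobs i t =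
      ∫ ω, Real.exp (v i t + ⟪u i t, X t ω⟫) *
        (Real.exp (v0 t + ⟪u0 t, X t ω⟫) / Bobs t) ∂Q)
    -- the corresponding theoretical quantities of the model `(X,u,0)`
    (B0obs : ℝ → ℝ) (S0obs : Fin m → ℝ → ℝ)
    (hB0obs : ∀ t, B0obs t = ∫ ω, Real.exp ⟪u0 t, X t ω⟫ ∂Q)
    (hS0obs : ∀ (i : Fin m) t, S0obs i t =
      ∫ ω, Real.exp ⟪u i t, X t ω⟫ *
        (Real.exp ⟪u0 t, X t ω⟫ / B0obs t) ∂Q) :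
    -- conclusions: the "in particular" identities and the exact-fit characterization
    (∀ t, t ∈ Set.Icc 0 𝕋 → Bobs t = Real.exp (v0 t) * B0obs t) ∧
    (∀ (i : Fin m) t, t ∈ Set.Icc 0 𝕋 → Sobs i t = Real.exp (v i t) * S0obs i t) ∧
    ((∀ T, T ∈ Set.Icc 0 𝕋 → Bobs T = BM T ∧ ∀ i : Fin m, Sobs i T = SM i T) ↔
      (∀ t, t ∈ Set.Icc 0 𝕋 →
        v0 t = Real.log (BM t) - Real.log (B0obs t) ∧
        ∀ i : Fin m, v i t = Real.log (SM i t) - Real.log (S0obs i t))) :=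
  stmt_8_general (m0 := m0) Q 𝕋 m X u0 u v0 v hu0int huint BM SM hBM hSM Bobs Sobs hBobs hSobs B0obs
    S0obs hB0obs hS0obs
end

section
/- Let (X,ℓ,λ,c,γ) be an affine short rate multi-curve model achieving an exact fit to the initial term structures, so that c_i(t) = log S^{M,δ_i}(0,t) − log S^{0,δ_i}(0,t), and suppose the spreads S^{0,δ_i}(t,T) of the model (X,0,λ,0,γ) are greater than one and ordered in i. Then: (i) for any i, if S^{M,δ_i}(0,t) ≥ S^{0,δ_i}(0,t) for all t ∈ [0,𝕋], then S^{δ_i}(t,T) ≥ 1 almost surely for all 0 ≤ t ≤ T ≤ 𝕋; (ii) for any i < j, if log S^{M,δ_i}(0,t) − log S^{M,δ_j}(0,t) ≤ log S^{0,δ_i}(0,t) − log S^{0,δ_j}(0,t) for all t ∈ [0,𝕋], then S^{δ_i}(t,T) ≤ S^{δ_j}(t,T) almost surely for all 0 ≤ t ≤ T ≤ 𝕋. -/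
/-!
Under exact fit, `S^{δ_i}(t,T) = e^{c_i(T)} S^{0,δ_i}(t,T)` with the deterministic shift
`c_i(T) = log (S^{M,δ_i}(0,T) / S^{0,δ_i}(0,T))`. The hypothesis of (i) makes this shift
nonnegative, that of (ii) makes it nondecreasing in `i`; multiplying the base spreads, which are
`≥ 1` and ordered in `i`, by the factors `e^{c_i(T)}` preserves both properties.
-/

open MeasureTheory RealInnerProductSpace

open Filter Real

section ExpScaling

variable {α : Type*} {l : Filter α}

theorem eventually_one_le_of_eq_exp_mul {f g : α → ℝ} {c : ℝ} (hc : 0 ≤ c)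
    (hf : ∀ᶠ x in l, f x = exp c * g x) (hg : ∀ᶠ x in l, 1 ≤ g x) :
    ∀ᶠ x in l, 1 ≤ f x := by
  filter_upwards [hf, hg] with x hfx hgx
  rw [hfx]
  exact one_le_mul_of_one_le_of_one_le (one_le_exp hc) hgx

theorem eventually_le_of_eq_exp_mul {f f' g g' : α → ℝ} {c c' : ℝ} (hc : c ≤ c')
    (hf : ∀ᶠ x in l, f x = exp c * g x) (hf' : ∀ᶠ x in l, f' x = exp c' * g' x)
    (hg : ∀ᶠ x in l, 0 ≤ g x) (hgg' : ∀ᶠ x in l, g x ≤ g' x) :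
    ∀ᶠ x in l, f x ≤ f' x := by
  filter_upwards [hf, hf', hg, hgg'] with x hfx hf'x hgx hgg'x
  rw [hfx, hf'x]
  exact mul_le_mul (exp_le_exp.2 hc) hgg'x hgx (exp_pos c').le

end ExpScaling

theorem stmt_12_general
    {Ω : Type*} {m0 : MeasurableSpace Ω} (Q : Measure Ω)
    (𝕋 : ℝ) (m : ℕ)
    -- the spreads `S` of the model `(X,ℓ,λ,c,γ)` and the spreads `S0` of the base model
    -- `(X,0,λ,0,γ)`, related by `S^{δ i}(t,T) = e^{c_i(T)} S^{0,δ i}(t,T)`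
    (S S0 : Fin m → ℝ → ℝ → Ω → ℝ)
    (c : Fin m → ℝ → ℝ)
    (hrel : ∀ (i : Fin m) t T, 0 ≤ t → t ≤ T → T ≤ 𝕋 →
      ∀ᵐ ω ∂Q, S i t T ω = Real.exp (c i T) * S0 i t T ω)
    -- the initially observed market spreads and the initial term structure of the base
    -- model spreads, both positive; the latter is deterministic: `S^{0,δ i}(0,t) = s0 i t`
    (SM s0 : Fin m → ℝ → ℝ)
    (hs0pos : ∀ (i : Fin m) t, t ∈ Set.Icc 0 𝕋 → 0 < s0 i t)
    -- exact fit: `c_i(t) = log S^{M,δ i}(0,t) - log S^{0,δ i}(0,t)`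
    (hc : ∀ (i : Fin m) t, t ∈ Set.Icc 0 𝕋 →
      c i t = Real.log (SM i t) - Real.log (s0 i t))
    -- the base model spreads are greater than one and ordered in `i`
    (hge1 : ∀ (i : Fin m) t T, 0 ≤ t → t ≤ T → T ≤ 𝕋 →
      ∀ᵐ ω ∂Q, 1 ≤ S0 i t T ω)
    (hord : ∀ (i j : Fin m), i ≤ j → ∀ t T, 0 ≤ t → t ≤ T → T ≤ 𝕋 →
      ∀ᵐ ω ∂Q, S0 i t T ω ≤ S0 j t T ω) :
    -- conclusions (i) and (ii):
    (∀ i : Fin m, (∀ t, t ∈ Set.Icc 0 𝕋 → s0 i t ≤ SM i t) →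
      ∀ t T, 0 ≤ t → t ≤ T → T ≤ 𝕋 → ∀ᵐ ω ∂Q, 1 ≤ S i t T ω) ∧
    (∀ i j : Fin m, i < j →
      (∀ t, t ∈ Set.Icc 0 𝕋 →
        Real.log (SM i t) - Real.log (SM j t) ≤
          Real.log (s0 i t) - Real.log (s0 j t)) →
      ∀ t T, 0 ≤ t → t ≤ T → T ≤ 𝕋 → ∀ᵐ ω ∂Q, S i t T ω ≤ S j t T ω) := by
  constructor
  · intro i hSM t T ht htT hT𝕋
    have hT : T ∈ Set.Icc 0 𝕋 := ⟨ht.trans htT, hT𝕋⟩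
    have hc_nonneg : 0 ≤ c i T := by
      rw [hc i T hT, sub_nonneg]
      exact log_le_log (hs0pos i T hT) (hSM T hT)
    exact eventually_one_le_of_eq_exp_mul hc_nonneg (hrel i t T ht htT hT𝕋)
      (hge1 i t T ht htT hT𝕋)
  · intro i j hij hlog t T ht htT hT𝕋
    have hT : T ∈ Set.Icc 0 𝕋 := ⟨ht.trans htT, hT𝕋⟩
    have hc_mono : c i T ≤ c j T := by
      rw [hc i T hT, hc j T hT]
      linarith [hlog T hT]
    have hS0_nonneg : ∀ᵐ ω ∂Q, 0 ≤ S0 i t T ω :=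
      (hge1 i t T ht htT hT𝕋).mono fun _ h ↦ zero_le_one.trans h
    exact eventually_le_of_eq_exp_mul hc_mono (hrel i t T ht htT hT𝕋) (hrel j t T ht htT hT𝕋)
      hS0_nonneg (hord i j hij.le t T ht htT hT𝕋)

/-- Let `(X,ℓ,λ,c,γ)` be an affine short rate multi-curve model achieving an
exact fit to the initial term structures, so that
`c_i(t) = log S^{M,δ i}(0,t) - log S^{0,δ i}(0,t)`, and suppose the spreads `S^{0,δ i}(t,T)` of
the base model `(X,0,λ,0,γ)` are greater than one and ordered in `i`
(recall `S^{δ i}(t,T) = e^{c_i(T)} S^{0,δ i}(t,T)`).  Then: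
(i) for any `i`, if `S^{M,δ i}(0,t) ≥ S^{0,δ i}(0,t)` for all `t ∈ [0,𝕋]`, then
`S^{δ i}(t,T) ≥ 1` a.s. for all `0 ≤ t ≤ T ≤ 𝕋`;
(ii) for any `i < j`, if
`log S^{M,δ i}(0,t) - log S^{M,δ j}(0,t) ≤ log S^{0,δ i}(0,t) - log S^{0,δ j}(0,t)` for all
`t ∈ [0,𝕋]`, then `S^{δ i}(t,T) ≤ S^{δ j}(t,T)` a.s. for all `0 ≤ t ≤ T ≤ 𝕋`. -/
theorem stmt_12
    {Ω : Type*} {m0 : MeasurableSpace Ω} (Q : Measure Ω) [IsProbabilityMeasure Q]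
    (𝕋 : ℝ) (h𝕋 : 0 ≤ 𝕋) (m : ℕ)
    -- the spreads `S` of the model `(X,ℓ,λ,c,γ)` and the spreads `S0` of the base model
    -- `(X,0,λ,0,γ)`, related by `S^{δ i}(t,T) = e^{c_i(T)} S^{0,δ i}(t,T)`
    (S S0 : Fin m → ℝ → ℝ → Ω → ℝ)
    (c : Fin m → ℝ → ℝ)
    (hrel : ∀ (i : Fin m) t T, 0 ≤ t → t ≤ T → T ≤ 𝕋 →
      ∀ᵐ ω ∂Q, S i t T ω = Real.exp (c i T) * S0 i t T ω)
    -- the initially observed market spreads and the initial term structure of the base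
    -- model spreads, both positive; the latter is deterministic: `S^{0,δ i}(0,t) = s0 i t`
    (SM s0 : Fin m → ℝ → ℝ)
    (hSM : ∀ (i : Fin m) t, t ∈ Set.Icc 0 𝕋 → 0 < SM i t)
    (hs0pos : ∀ (i : Fin m) t, t ∈ Set.Icc 0 𝕋 → 0 < s0 i t)
    (hs0 : ∀ (i : Fin m) t, t ∈ Set.Icc 0 𝕋 → ∀ ω, S0 i 0 t ω = s0 i t)
    -- exact fit: `c_i(t) = log S^{M,δ i}(0,t) - log S^{0,δ i}(0,t)`
    (hc : ∀ (i : Fin m) t, t ∈ Set.Icc 0 𝕋 →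
      c i t = Real.log (SM i t) - Real.log (s0 i t))
    -- the base model spreads are greater than one and ordered in `i`
    (hge1 : ∀ (i : Fin m) t T, 0 ≤ t → t ≤ T → T ≤ 𝕋 →
      ∀ᵐ ω ∂Q, 1 ≤ S0 i t T ω)
    (hord : ∀ (i j : Fin m), i ≤ j → ∀ t T, 0 ≤ t → t ≤ T → T ≤ 𝕋 →
      ∀ᵐ ω ∂Q, S0 i t T ω ≤ S0 j t T ω) :
    -- conclusions (i) and (ii):
    (∀ i : Fin m, (∀ t, t ∈ Set.Icc 0 𝕋 → s0 i t ≤ SM i t) →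
      ∀ t T, 0 ≤ t → t ≤ T → T ≤ 𝕋 → ∀ᵐ ω ∂Q, 1 ≤ S i t T ω) ∧
    (∀ i j : Fin m, i < j →
      (∀ t, t ∈ Set.Icc 0 𝕋 →
        Real.log (SM i t) - Real.log (SM j t) ≤
          Real.log (s0 i t) - Real.log (s0 j t)) →
      ∀ t T, 0 ≤ t → t ≤ T → T ≤ 𝕋 → ∀ᵐ ω ∂Q, S i t T ω ≤ S j t T ω) :=
  stmt_12_general (m0 := m0) Q 𝕋 m S S0 c hrel SM s0 hs0pos hc hge1 hord
end

section
/- Let (X,ℓ,λ,c,γ) be an affine short rate multi-curve model with a single tenor δ, so that B_T = exp(∫_0^T (ℓ(s) + ⟨λ,X_s⟩) ds) and log S^{δ}(T,T) = c(T) + ⟨γ, X_T⟩. Then the density process N_t := E[ S^{δ}(T,T) / (B_T S^{δ}(0,T) B(0,T)) | F_t ] of the measure Q̃ with dQ̃/dQ = S^{δ}(T,T)/(B_T S^{δ}(0,T) B(0,T)) is given explicitly, for 0 ≤ t ≤ T, by N_t = (1/(S^{δ}(0,T) B(0,T))) exp( c(T) − ∫_0^T ℓ(s) ds + φ̃(T−t,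 γ, −λ) + ⟨ψ̃(T−t, γ, −λ), X_t⟩ − ⟨λ, ∫_0^t X_s ds⟩ ), where φ̃ and ψ̃ are the characteristic exponents of the process Y = (X, ∫_0^· X_s ds). -/
/-!
Discounting by the bank account contributes `exp(-∫_0^T ℓ - ⟨λ, ∫_0^T X_s ds⟩)` and the spot
spread contributes `exp(c(T) + ⟨γ, X_T⟩)`, so the Radon–Nikodym density is a deterministic
constant times `exp(⟨γ, X_T⟩ + ⟨-λ, ∫_0^T X_s ds⟩)`. The constant pulls out of the conditional
expectation, and the joint affine transform formula with `(u₁, u₂) = (γ, -λ)` evaluates the rest.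
-/

open MeasureTheory RealInnerProductSpace

section

variable {V : Type*} [NormedAddCommGroup V] [InnerProductSpace ℝ V]

theorem intervalIntegral_inner [CompleteSpace V] {μ : Measure ℝ} {f : ℝ → V} {a b : ℝ}
    (hf : IntervalIntegrable f μ a b) (c : V) :
    ∫ s in a..b, ⟪c, f s⟫ ∂μ = ⟪c, ∫ s in a..b, f s ∂μ⟫ :=
  (innerSL ℝ c).intervalIntegral_comp_comm hf

theorem intervalIntegral_add_inner [CompleteSpace V] {μ : Measure ℝ} {g : ℝ → ℝ} {f : ℝ → V}
    {a b : ℝ} (hg : IntervalIntegrable g μ a b) (hf : IntervalIntegrable f μ a b) (c : V) :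
    ∫ s in a..b, (g s + ⟪c, f s⟫) ∂μ = (∫ s in a..b, g s ∂μ) + ⟪c, ∫ s in a..b, f s ∂μ⟫ := by
  have hcf : IntervalIntegrable (fun s => ⟪c, f s⟫) μ a b :=
    ⟨(innerSL ℝ c).integrable_comp hf.1, (innerSL ℝ c).integrable_comp hf.2⟩
  rw [intervalIntegral.integral_add hg hcf, intervalIntegral_inner hf]

end

theorem Real.exp_add_div_exp_add_mul (a x L y k : ℝ) :
    Real.exp (a + x) / (Real.exp (L + y) * k) = 1 / k * Real.exp (a - L) * Real.exp (x - y) := by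
  simp only [Real.exp_add, Real.exp_sub]
  field_simp

theorem MeasureTheory.condExp_const_mul_ae_eq {Ω : Type*} {m m0 : MeasurableSpace Ω}
    {μ : Measure Ω} {f g : Ω → ℝ} (C : ℝ) (h : μ[f|m] =ᵐ[μ] g) :
    μ[fun ω => C * f ω | m] =ᵐ[μ] fun ω => C * g ω := by
  filter_upwards [condExp_smul C f m, h] with ω hCf hf
  rw [Pi.smul_apply, hf, smul_eq_mul] at hCf
  exact hCf

theorem stmt_19_general
    {V : Type*} [NormedAddCommGroup V] [InnerProductSpace ℝ V] [FiniteDimensional ℝ V]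
    {Ω : Type*} {m0 : MeasurableSpace Ω} (Q : Measure Ω)
    (𝕋 : ℝ) (ℱ : Filtration ℝ m0)
    -- the driving process `X`, adapted with integrable paths, and `IntX t = ∫_0^t X_s ds`
    (X IntX : ℝ → Ω → V)
    (hXpath : ∀ ω, ∀ s, s ∈ Set.Icc 0 𝕋 →
      IntervalIntegrable (fun s' => X s' ω) MeasureTheory.volume 0 s)
    (hIntX : ∀ s ω, IntX s ω = ∫ s' in (0:ℝ)..s, X s' ω)
    -- the characteristic exponents `φ̃, ψ̃` of the affine process `Y = (X, ∫_0^· X_s ds)`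
    (φt : ℝ → V → V → ℝ) (ψt : ℝ → V → V → V)
    (haff : ∀ (u1 u2 : V) (s T' : ℝ), 0 ≤ s → s ≤ T' → T' ≤ 𝕋 →
      Integrable (fun ω => Real.exp (⟪u1, X T' ω⟫ + ⟪u2, IntX T' ω⟫)) Q →
      Q[fun ω => Real.exp (⟪u1, X T' ω⟫ + ⟪u2, IntX T' ω⟫) | ℱ s] =ᵐ[Q]
        fun ω => Real.exp (φt (T' - s) u1 u2 + ⟪ψt (T' - s) u1 u2, X s ω⟫ +
          ⟪u2, IntX s ω⟫))
    -- the model ingredients `(ℓ, λ, c, γ)` for the single tenor `δ`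
    (ℓ : ℝ → ℝ) (hℓ : IntervalIntegrable ℓ MeasureTheory.volume 0 𝕋)
    (lam γv : V) (c : ℝ → ℝ)
    -- the reset date `T` and the exponential moment condition
    (t T : ℝ) (ht : 0 ≤ t) (htT : t ≤ T) (hT𝕋 : T ≤ 𝕋)
    (hmom : Integrable (fun ω => Real.exp (⟪γv, X T ω⟫ - ⟪lam, IntX T ω⟫)) Q)
    -- the OIS bank account `B_T = exp(∫_0^T (ℓ(s) + ⟨λ,X_s⟩) ds)`
    (B : ℝ → Ω → ℝ)
    (hB : ∀ s ω, B s ω = Real.exp (∫ s' in (0:ℝ)..s, (ℓ s' + ⟪lam, X s' ω⟫)))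
    -- the spot spread `log S^δ(T,T) = c(T) + ⟨γ,X_T⟩`
    (S : ℝ → ℝ → Ω → ℝ)
    (hSpot : ∀ s, s ∈ Set.Icc 0 𝕋 → ∀ ω, S s s ω = Real.exp (c s + ⟪γv, X s ω⟫))
    -- the time-0 bond price `B(0,T) = E[1/B_T]` and spread
    -- `S^δ(0,T) = E^{Q^T}[S^δ(T,T)] = E[S^δ(T,T)/(B_T B(0,T))]`
    (b0 s0 : ℝ)
    -- the density process `N_t = E[S^δ(T,T)/(B_T S^δ(0,T) B(0,T)) | F_t]` of `Q̃`
    (Nt : ℝ → Ω → ℝ)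
    (hNt : ∀ s, 0 ≤ s → s ≤ T →
      Nt s =ᵐ[Q] Q[fun ω => S T T ω / (B T ω * s0 * b0) | ℱ s]) :
    -- conclusion: the explicit formula for the density process
    Nt t =ᵐ[Q] fun ω =>
      (1 / (s0 * b0)) *
        Real.exp (c T - (∫ s in (0:ℝ)..T, ℓ s) + φt (T - t) γv (-lam) +
          ⟪ψt (T - t) γv (-lam), X t ω⟫ - ⟪lam, IntX t ω⟫) := by
  have hT : T ∈ Set.Icc 0 𝕋 := ⟨ht.trans htT, hT𝕋⟩
  have hℓT : IntervalIntegrable ℓ volume 0 T :=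
    hℓ.mono_set (Set.uIcc_subset_uIcc Set.left_mem_uIcc (Set.mem_uIcc_of_le (ht.trans htT) hT𝕋))
  set C := 1 / (s0 * b0) * Real.exp (c T - ∫ s in (0:ℝ)..T, ℓ s)
  have hdensity : (fun ω => S T T ω / (B T ω * s0 * b0)) =
      fun ω => C * Real.exp (⟪γv, X T ω⟫ + ⟪-lam, IntX T ω⟫) := by
    funext ω
    rw [hSpot T hT, hB, intervalIntegral_add_inner hℓT (hXpath ω T hT), ← hIntX, mul_assoc,
      Real.exp_add_div_exp_add_mul, inner_neg_left, ← sub_eq_add_neg]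
  have hmom' : Integrable (fun ω => Real.exp (⟪γv, X T ω⟫ + ⟪-lam, IntX T ω⟫)) Q := by
    simpa only [inner_neg_left, ← sub_eq_add_neg] using hmom
  have hcond := condExp_const_mul_ae_eq (m := ℱ t) C (haff γv (-lam) t T ht htT hT𝕋 hmom')
  rw [← hdensity] at hcond
  filter_upwards [hNt t ht htT, hcond] with ω hN hω
  rw [hN, hω, inner_neg_left, mul_assoc, ← Real.exp_add]
  ring_nf

/-- Let `(X,ℓ,λ,c,γ)` be an affine short rate multi-curve model with a
single tenor `δ`, so that `B_T = exp(∫_0^T (ℓ(s) + ⟨λ,X_s⟩) ds)` and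
`log S^δ(T,T) = c(T) + ⟨γ,X_T⟩`.  Then the density process
`N_t = E[S^δ(T,T)/(B_T S^δ(0,T) B(0,T)) | F_t]` of the measure `Q̃` with
`dQ̃/dQ = S^δ(T,T)/(B_T S^δ(0,T) B(0,T))` is given explicitly, for `0 ≤ t ≤ T`, by
`N_t = (1/(S^δ(0,T) B(0,T))) exp(c(T) - ∫_0^T ℓ(s) ds + φ̃(T-t,γ,-λ)
        + ⟨ψ̃(T-t,γ,-λ),X_t⟩ - ⟨λ,∫_0^t X_s ds⟩)`,
where `φ̃, ψ̃` are the characteristic exponents of `Y = (X, ∫_0^· X_s ds)`. -/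
theorem stmt_19
    {V : Type*} [NormedAddCommGroup V] [InnerProductSpace ℝ V] [FiniteDimensional ℝ V]
    [MeasurableSpace V] [BorelSpace V]
    {Ω : Type*} {m0 : MeasurableSpace Ω} (Q : Measure Ω) [IsProbabilityMeasure Q]
    (𝕋 : ℝ) (ℱ : Filtration ℝ m0)
    -- the driving process `X`, adapted with integrable paths, and `IntX t = ∫_0^t X_s ds`
    (X IntX : ℝ → Ω → V)
    (hXadapt : ∀ s, StronglyMeasurable[ℱ s] (X s))
    (hXpath : ∀ ω, ∀ s, s ∈ Set.Icc 0 𝕋 →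
      IntervalIntegrable (fun s' => X s' ω) MeasureTheory.volume 0 s)
    (hIntX : ∀ s ω, IntX s ω = ∫ s' in (0:ℝ)..s, X s' ω)
    -- the characteristic exponents `φ̃, ψ̃` of the affine process `Y = (X, ∫_0^· X_s ds)`
    (φt : ℝ → V → V → ℝ) (ψt : ℝ → V → V → V)
    (haff : ∀ (u1 u2 : V) (s T' : ℝ), 0 ≤ s → s ≤ T' → T' ≤ 𝕋 →
      Integrable (fun ω => Real.exp (⟪u1, X T' ω⟫ + ⟪u2, IntX T' ω⟫)) Q →
      Q[fun ω => Real.exp (⟪u1, X T' ω⟫ + ⟪u2, IntX T' ω⟫) | ℱ s] =ᵐ[Q]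
        fun ω => Real.exp (φt (T' - s) u1 u2 + ⟪ψt (T' - s) u1 u2, X s ω⟫ +
          ⟪u2, IntX s ω⟫))
    -- the model ingredients `(ℓ, λ, c, γ)` for the single tenor `δ`
    (δ : ℝ) (hδ : 0 < δ)
    (ℓ : ℝ → ℝ) (hℓ : IntervalIntegrable ℓ MeasureTheory.volume 0 𝕋)
    (lam γv : V) (c : ℝ → ℝ)
    -- the reset date `T` and the exponential moment condition
    (t T : ℝ) (ht : 0 ≤ t) (htT : t ≤ T) (hT𝕋 : T ≤ 𝕋)
    (hmom : Integrable (fun ω => Real.exp (⟪γv, X T ω⟫ - ⟪lam, IntX T ω⟫)) Q)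
    -- the OIS bank account `B_T = exp(∫_0^T (ℓ(s) + ⟨λ,X_s⟩) ds)`
    (B : ℝ → Ω → ℝ)
    (hB : ∀ s ω, B s ω = Real.exp (∫ s' in (0:ℝ)..s, (ℓ s' + ⟪lam, X s' ω⟫)))
    -- the spot spread `log S^δ(T,T) = c(T) + ⟨γ,X_T⟩`
    (S : ℝ → ℝ → Ω → ℝ)
    (hSpot : ∀ s, s ∈ Set.Icc 0 𝕋 → ∀ ω, S s s ω = Real.exp (c s + ⟪γv, X s ω⟫))
    -- the time-0 bond price `B(0,T) = E[1/B_T]` and spread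
    -- `S^δ(0,T) = E^{Q^T}[S^δ(T,T)] = E[S^δ(T,T)/(B_T B(0,T))]`
    (b0 s0 : ℝ)
    (hb0 : b0 = ∫ ω, (B T ω)⁻¹ ∂Q)
    (hs0 : s0 = ∫ ω, S T T ω / (B T ω * b0) ∂Q)
    -- the density process `N_t = E[S^δ(T,T)/(B_T S^δ(0,T) B(0,T)) | F_t]` of `Q̃`
    (Nt : ℝ → Ω → ℝ)
    (hNt : ∀ s, 0 ≤ s → s ≤ T →
      Nt s =ᵐ[Q] Q[fun ω => S T T ω / (B T ω * s0 * b0) | ℱ s]) :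
    -- conclusion: the explicit formula for the density process
    Nt t =ᵐ[Q] fun ω =>
      (1 / (s0 * b0)) *
        Real.exp (c T - (∫ s in (0:ℝ)..T, ℓ s) + φt (T - t) γv (-lam) +
          ⟪ψt (T - t) γv (-lam), X t ω⟫ - ⟪lam, IntX t ω⟫) :=
  stmt_19_general Q 𝕋 ℱ X IntX hXpath hIntX φt ψt haff ℓ hℓ lam γv c t T ht htT hT𝕋 hmom B hB S
    hSpot b0 s0 Nt hNt
end
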